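/- arXiv:0902.4332 — 7 statements merged into one kernel-verified Lean document; each statement's English description precedes it below -/
import Mathlib

section
/- Let ℓ be a prime, n ≥ 1 an integer, and α an element of Z/ℓ^n with ℓ-adic valuation k (where the valuation of 0 is defined via the zero case). Then the number of pairs (x,y) ∈ (Z/ℓ^n)² with xy = α equals (k+1)(ℓ^n − ℓ^{n−1}) if α ≠ 0, and equals (n+1)(ℓ^n − ℓ^{n−1}) + ℓ^{n−1} if α = 0. -/
/-!
For fixed `x`, the solutions `y` of `x * y = β` in `ZMod m` form a coset of the kernel of
multiplication by `x`, whose image is the cyclic subgroup generated by `x`; so there are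
`gcd(m, x)` of them when `gcd(m, x) ∣ β` and none otherwise. Since exactly `φ (m / d)` residues
have `gcd(m, x) = d`, the number of pairs is `∑ φ (m / d) * d` over the divisors `d` of `m`
that divide `β`. For `m = ℓ ^ n`, each proper divisor `ℓ ^ j` contributes
`φ (ℓ ^ (n - j)) * ℓ ^ j = ℓ ^ n - ℓ ^ (n - 1)`, and `ℓ ^ j ∣ β` exactly when `j ≤ v_ℓ(β)`;
the divisor `ℓ ^ n` itself divides only `β = 0`, contributing `ℓ ^ n`.
-/
open Finset
open scoped Nat

lemma Nat.sum_range_comp_gcd {M : Type*} [AddCommMonoid M] (m : ℕ) (f : ℕ → M) :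
    ∑ a ∈ range m, f (m.gcd a) = ∑ d ∈ m.divisors, φ (m / d) • f d := by
  rcases m.eq_zero_or_pos with rfl | hm
  · simp
  rw [← sum_fiberwise_of_maps_to (t := m.divisors) (g := m.gcd)
    fun a _ => mem_divisors.2 ⟨gcd_dvd_left m a, hm.ne'⟩]
  refine sum_congr rfl fun d hd => ?_
  rw [sum_congr rfl fun a ha => congrArg f (mem_filter.1 ha).2, sum_const,
    totient_div_of_dvd (dvd_of_mem_divisors hd)]

lemma Nat.totient_prime_pow_sub_mul_pow {ℓ n j : ℕ} (hℓ : ℓ.Prime) (hj : j < n) :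
    φ (ℓ ^ (n - j)) * ℓ ^ j = ℓ ^ n - ℓ ^ (n - 1) := by
  obtain ⟨i, rfl⟩ := Nat.exists_eq_add_of_lt hj
  rw [show j + i + 1 - j = i + 1 by omega, show j + i + 1 - 1 = i + j by omega,
    totient_prime_pow_succ hℓ, mul_right_comm, ← pow_add, pow_succ, Nat.mul_sub_one, add_comm j]

namespace ZMod

section

variable {m : ℕ} [NeZero m]

lemma sum_comp_val {M : Type*} [AddCommMonoid M] (f : ℕ → M) :
    ∑ x : ZMod m, f x.val = ∑ a ∈ range m, f a :=
  sum_nbij' val (↑) (fun x _ => mem_range.2 (val_lt x))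
    (fun _ _ => mem_univ _) (fun x _ => natCast_zmod_val x)
    (fun _ ha => val_cast_of_lt (mem_range.1 ha)) fun _ _ => rfl

lemma range_mulLeft (x : ZMod m) :
    (AddMonoidHom.mulLeft x).range = AddSubgroup.zmultiples x := by
  ext β
  constructor
  · rintro ⟨y, rfl⟩
    exact ⟨y.val, by simp [mul_comm]⟩
  · rintro ⟨k, rfl⟩
    exact ⟨k, by simp [mul_comm]⟩

lemma mem_zmultiples_iff_gcd_dvd (x β : ZMod m) :
    β ∈ AddSubgroup.zmultiples x ↔ m.gcd x.val ∣ β.val := by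
  have hcast : ∀ k : ℤ, k • x = β ↔ (m : ℤ) ∣ β.val - x.val * k := fun k => by
    rw [← intCast_eq_intCast_iff_dvd_sub]
    simp [mul_comm]
  simp only [AddSubgroup.mem_zmultiples_iff, hcast, ← Int.gcd_natCast_natCast, Int.gcd_dvd_iff]
  constructor
  · rintro ⟨k, q, hq⟩
    exact ⟨q, k, by linarith⟩
  · rintro ⟨q, k, hq⟩
    exact ⟨k, q, by linarith⟩

lemma addOrderOf_eq_div_gcd (x : ZMod m) : addOrderOf x = m / m.gcd x.val := by
  rw [← addOrderOf_coe _ (NeZero.ne m), natCast_zmod_val]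

lemma card_filter_mul_eq_zero (x : ZMod m) : #{y | x * y = 0} = m.gcd x.val := by
  have hker := (AddMonoidHom.mulLeft x).ker.card_mul_index
  rw [AddSubgroup.index_ker, range_mulLeft, Nat.card_zmultiples, Nat.card_zmod,
    addOrderOf_eq_div_gcd] at hker
  have hcard : #{y | x * y = 0} = Nat.card (AddMonoidHom.mulLeft x).ker := by
    rw [← Nat.card_eq_finsetCard]
    exact Nat.card_congr (Equiv.subtypeEquivRight fun y => by simp)
  rw [hcard]
  exact Nat.eq_of_mul_eq_mul_right (Nat.div_pos (Nat.gcd_le_left _ (NeZero.pos m))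
    (Nat.gcd_pos_of_pos_left _ (NeZero.pos m)))
    (hker.trans (Nat.mul_div_cancel' (Nat.gcd_dvd_left _ _)).symm)

lemma card_filter_mul_eq (x β : ZMod m) :
    #{y | x * y = β} = if m.gcd x.val ∣ β.val then m.gcd x.val else 0 := by
  split_ifs with h
  · rw [← card_filter_mul_eq_zero]
    have hβ : β ∈ Set.range (AddMonoidHom.mulLeft x) := by
      rw [← AddMonoidHom.coe_range, range_mulLeft]
      exact (mem_zmultiples_iff_gcd_dvd x β).2 h
    exact AddMonoidHom.card_fiber_eq_of_mem_range (AddMonoidHom.mulLeft x) hβ ⟨0, mul_zero x⟩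
  · rw [Finset.card_eq_zero, filter_eq_empty_iff]
    rintro y - rfl
    exact h ((mem_zmultiples_iff_gcd_dvd x _).1 (range_mulLeft x ▸ ⟨y, rfl⟩))

lemma card_pairs_mul_eq_sum_divisors (β : ZMod m) :
    Nat.card {p : ZMod m × ZMod m // p.1 * p.2 = β} =
      ∑ d ∈ m.divisors, if d ∣ β.val then φ (m / d) * d else 0 := by
  rw [Nat.card_eq_fintype_card, Fintype.card_subtype, card_filter, ← univ_product_univ,
    sum_product]
  simp only [← card_filter, card_filter_mul_eq]
  rw [sum_comp_val (fun a => if m.gcd a ∣ β.val then m.gcd a else 0)]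
  refine (Nat.sum_range_comp_gcd m fun d => if d ∣ β.val then d else 0).trans ?_
  simp only [smul_eq_mul, mul_ite, mul_zero]

end

lemma card_pairs_mul_eq_prime_pow {ℓ n : ℕ} (hℓ : ℓ.Prime) (β : ZMod (ℓ ^ n)) :
    Nat.card {p : ZMod (ℓ ^ n) × ZMod (ℓ ^ n) // p.1 * p.2 = β} =
      (∑ j ∈ range n, if ℓ ^ j ∣ β.val then ℓ ^ n - ℓ ^ (n - 1) else 0) +
        if β = 0 then ℓ ^ n else 0 := by
  have hpos : 0 < ℓ ^ n := pow_pos hℓ.pos n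
  have : NeZero (ℓ ^ n) := ⟨hpos.ne'⟩
  have hdvd_top : ℓ ^ n ∣ β.val ↔ β = 0 :=
    ⟨fun h => (val_eq_zero β).1 (Nat.eq_zero_of_dvd_of_lt h (val_lt β)),
      by rintro rfl; simp⟩
  rw [card_pairs_mul_eq_sum_divisors, Nat.sum_divisors_prime_pow hℓ, sum_range_succ,
    Nat.div_self hpos, Nat.totient_one, one_mul, if_congr hdvd_top rfl rfl]
  congr 1
  refine sum_congr rfl fun j hj => ?_
  rw [Nat.pow_div (mem_range.1 hj).le hℓ.pos,
    Nat.totient_prime_pow_sub_mul_pow hℓ (mem_range.1 hj)]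

end ZMod

theorem stmt0_general (ℓ : ℕ) (hℓ : ℓ.Prime) (n : ℕ)
    (α : ZMod (ℓ ^ n)) (k : ℕ) (hk : α ≠ 0 → k = padicValNat ℓ α.val) :
    Nat.card {p : ZMod (ℓ ^ n) × ZMod (ℓ ^ n) // p.1 * p.2 = α} =
      if α = 0 then (n + 1) * (ℓ ^ n - ℓ ^ (n - 1)) + ℓ ^ (n - 1)
      else (k + 1) * (ℓ ^ n - ℓ ^ (n - 1)) := by
  have := Fact.mk hℓ
  rw [ZMod.card_pairs_mul_eq_prime_pow hℓ]
  split_ifs with hα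
  · simp only [hα, ZMod.val_zero, dvd_zero, if_true, sum_const, card_range, smul_eq_mul]
    rw [add_mul, one_mul, add_assoc,
      Nat.sub_add_cancel (Nat.pow_le_pow_right hℓ.pos (n.sub_le 1))]
  · have hval : α.val ≠ 0 := (ZMod.val_ne_zero α).2 hα
    have hkn : k < n := hk hα ▸
      (padicValNat_le_nat_log _).trans_lt (Nat.log_lt_of_lt_pow hval (ZMod.val_lt α))
    have hdvd : ∀ j, ℓ ^ j ∣ α.val ↔ j ∈ range (k + 1) := fun j => by
      rw [mem_range, Nat.lt_succ_iff, hk hα, padicValNat_dvd_iff_le hval]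
    simp only [hdvd, sum_ite_mem, inter_eq_right.2 (range_subset_range.2 hkn), sum_const,
      card_range, smul_eq_mul, add_zero]

/-- Lemma (number of solutions to `x * y = α` in `Z/ℓ^n`). -/
theorem stmt0 (ℓ : ℕ) (hℓ : ℓ.Prime) (n : ℕ) (hn : 1 ≤ n)
    (α : ZMod (ℓ ^ n)) (k : ℕ) (hk : α ≠ 0 → k = padicValNat ℓ α.val) :
    Nat.card {p : ZMod (ℓ ^ n) × ZMod (ℓ ^ n) // p.1 * p.2 = α} =
      if α = 0 then (n + 1) * (ℓ ^ n - ℓ ^ (n - 1)) + ℓ ^ (n - 1)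
      else (k + 1) * (ℓ ^ n - ℓ ^ (n - 1)) :=
  stmt0_general ℓ hℓ n α k hk
end

section
/- Let ℓ ≥ 3 be a prime, n ≥ 1 an integer, and q a unit in Z/ℓ^n. Fix t ∈ Z/ℓ^n with Δ := t² − 4q a nonzero square in Z/ℓ^n. Then the number of matrices in GL₂(Z/ℓ^n) with determinant q and trace t equals ℓ^{2n} + ℓ^{2n−1}. -/
/-!
Write `Δ = δ²`. Since `2` is a unit, `X² - tX + q` has the root `β = (t - δ) / 2`, and `M ↦ M - β`
identifies the matrices of determinant `q` and trace `t` with the singular matrices of trace `δ`,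
i.e. with the solutions of `b c = a (δ - a)`. For `b` of `ℓ`-adic valuation `i` there are `ℓ^i`
solutions `c` when `ℓ^i ∣ a (δ - a)` and none otherwise, and `ℓ^(n-i) - ℓ^(n-i-1)` such `b`
(one `b` for `i = n`). The number of `a` with `ℓ^j ∣ a (δ - a)` is explicit in terms of
`e = v(δ)`, where `2e < n` because `δ² ≠ 0`; summing up, the dependence on `e` telescopes away.
-/

open Finset

theorem card_mul_eq_ite_dvd {R : Type*} [CommRing R] [Fintype R] [DecidableEq R] (b m : R) :
    #{c | b * c = m} = if b ∣ m then #{c | b * c = 0} else 0 := by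
  split_ifs with h
  · obtain ⟨d, rfl⟩ := h
    exact card_equiv (Equiv.subRight d) fun c ↦ by simp [mul_sub, sub_eq_zero]
  · exact card_eq_zero.mpr <| filter_eq_empty_iff.mpr fun c _ hc ↦ h ⟨c, hc.symm⟩

namespace Matrix

variable {R : Type*} [CommRing R]

theorem card_det_trace_eq_card_det_zero {q t β : R} (hβ : β ^ 2 - t * β + q = 0) :
    Nat.card {M : Matrix (Fin 2) (Fin 2) R // M.det = q ∧ M.trace = t} =
      Nat.card {M : Matrix (Fin 2) (Fin 2) R // M.det = 0 ∧ M.trace = t - 2 * β} := by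
  refine Nat.card_congr <| (Equiv.subRight (scalar (Fin 2) β)).subtypeEquiv fun M ↦ ?_
  have hdet : (M - scalar (Fin 2) β).det = M.det - β * M.trace + β ^ 2 := by
    simp [det_fin_two, trace_fin_two]
    ring
  have htr : (M - scalar (Fin 2) β).trace = M.trace - 2 * β := by
    simp [trace_fin_two]
  simp only [Equiv.subRight_apply, hdet, htr]
  constructor
  · rintro ⟨hq, ht⟩
    exact ⟨by linear_combination hq + ht * (-β) + hβ, by rw [ht]⟩
  · rintro ⟨hq, ht⟩
    have ht' : M.trace = t := by linear_combination ht
    exact ⟨by linear_combination hq + ht' * β - hβ, ht'⟩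

theorem card_det_eq_zero_trace_eq_sum [Fintype R] [DecidableEq R] (τ : R) :
    Nat.card {M : Matrix (Fin 2) (Fin 2) R // M.det = 0 ∧ M.trace = τ} =
      ∑ b, ∑ a, #{c | b * c = a * (τ - a)} := by
  let e : {M : Matrix (Fin 2) (Fin 2) R // M.det = 0 ∧ M.trace = τ} ≃
      {p : R × R × R // p.1 * p.2.2 = p.2.1 * (τ - p.2.1)} :=
    { toFun := fun M ↦ ⟨(M.1 0 1, M.1 0 0, M.1 1 0), by
        obtain ⟨M, hdet, htr⟩ := M
        rw [det_fin_two] at hdet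
        rw [trace_fin_two] at htr
        dsimp only
        linear_combination -hdet + M 0 0 * htr⟩
      invFun := fun p ↦ ⟨!![p.1.2.1, p.1.1; p.1.2.2, τ - p.1.2.1], by
        rw [det_fin_two_of, trace_fin_two_of]
        exact ⟨by linear_combination -p.2, by ring⟩⟩
      left_inv := fun M ↦ by
        obtain ⟨M, -, htr⟩ := M
        rw [trace_fin_two] at htr
        ext i j
        fin_cases i <;> fin_cases j <;> simp [← htr]
      right_inv := fun p ↦ rfl }
  rw [Nat.card_congr e, Nat.card_eq_fintype_card, Fintype.card_subtype, card_filter,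
    Fintype.sum_prod_type]
  simp_rw [Fintype.sum_prod_type, ← card_filter]

end Matrix

/-- The number of `a ∈ ZMod (ℓ ^ n)` with `ℓ ^ j ∣ a * (τ - a)`, for `j ≤ n` and `τ` of
valuation `e`: for `j ≤ 2e` the condition reads `ℓ ^ ⌈j/2⌉ ∣ a`, for `j > 2e` it reads `ℓ ^ (j - e) ∣ a` or
`ℓ ^ (j - e) ∣ τ - a`, and these exclude each other. -/
def quadraticCount (ℓ n e j : ℕ) : ℕ :=
  if j ≤ 2 * e then ℓ ^ (n - (j + 1) / 2) else 2 * ℓ ^ (n - (j - e))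

theorem sub_one_mul_sum_quadraticCount {ℓ n e : ℕ} (he : 2 * e < n) :
    ((ℓ : ℤ) - 1) * ∑ j ∈ range n, (quadraticCount ℓ n e j : ℤ) =
      ℓ ^ (n + 1) + ℓ ^ n - 2 * ℓ ^ (e + 1) := by
  -- `F j = (ℓ - 1) * ∑ i ∈ Ico j n, quadraticCount ℓ n e i + 2 * ℓ ^ (e + 1)`
  let F : ℕ → ℤ := fun j ↦
    if j ≤ 2 * e then ℓ ^ (n + 1 - (j + 1) / 2) + ℓ ^ (n - j / 2) else 2 * ℓ ^ (n + 1 - (j - e))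
  have step : ∀ j < n, ((ℓ : ℤ) - 1) * quadraticCount ℓ n e j = F j - F (j + 1) := by
    intro j hj
    simp only [quadraticCount, F]
    rcases lt_trichotomy j (2 * e) with hlt | rfl | hgt
    · rw [if_pos hlt.le, if_pos hlt.le, if_pos (Nat.succ_le_of_lt hlt)]
      rcases Nat.even_or_odd' j with ⟨k, rfl | rfl⟩
      · simp only [show (2 * k + 1) / 2 = k by omega, show 2 * k / 2 = k by omega,
          show (2 * k + 1 + 1) / 2 = k + 1 by omega, show n + 1 - k = n - k + 1 by omega,
          show n + 1 - (k + 1) = n - k by omega]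
        push_cast; ring
      · simp only [show (2 * k + 1 + 1) / 2 = k + 1 by omega, show (2 * k + 1) / 2 = k by omega,
          show (2 * k + 1 + 1 + 1) / 2 = k + 1 by omega,
          show n + 1 - (k + 1) = n - (k + 1) + 1 by omega, show n - k = n - (k + 1) + 1 by omega]
        push_cast; ring
    · simp only [le_rfl, if_true, show ¬ 2 * e + 1 ≤ 2 * e by omega, if_false,
        show (2 * e + 1) / 2 = e by omega, show 2 * e / 2 = e by omega,
        show 2 * e + 1 - e = e + 1 by omega, show n + 1 - (e + 1) = n - e by omega,
        show n + 1 - e = n - e + 1 by omega]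
      push_cast; ring
    · simp only [hgt.not_ge, if_false, show ¬ j + 1 ≤ 2 * e by omega,
        show n + 1 - (j - e) = n - (j - e) + 1 by omega,
        show n + 1 - (j + 1 - e) = n - (j - e) by omega]
      push_cast; ring
  rw [mul_sum, sum_congr rfl fun j hj ↦ step j (mem_range.mp hj), sum_range_sub']
  simp only [F, if_pos (Nat.zero_le _), if_neg he.not_ge]
  rw [show n + 1 - (n - e) = e + 1 by omega]
  norm_num

theorem sum_shells_mul_quadraticCount {ℓ n e : ℕ} (hℓ : 1 ≤ ℓ) (he : 2 * e < n) :
    ∑ j ∈ range n, (ℓ ^ (n - j) - ℓ ^ (n - (j + 1))) • (quadraticCount ℓ n e j * ℓ ^ j) +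
      quadraticCount ℓ n e n * ℓ ^ n = ℓ ^ (2 * n) + ℓ ^ (2 * n - 1) := by
  have hshell : ∀ j ∈ range n, (ℓ ^ (n - j) - ℓ ^ (n - (j + 1))) • (quadraticCount ℓ n e j * ℓ ^ j)
      = ℓ ^ (n - 1) * ((ℓ - 1) * quadraticCount ℓ n e j) := fun j hj ↦ by
    have hj := mem_range.mp hj
    rw [smul_eq_mul, show n - j = n - (j + 1) + 1 by omega, show n - 1 = n - (j + 1) + j by omega]
    zify [hℓ, Nat.pow_le_pow_right hℓ (Nat.le_succ (n - (j + 1)))]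
    ring
  have hn : quadraticCount ℓ n e n = 2 * ℓ ^ e := by
    rw [quadraticCount, if_neg he.not_ge, Nat.sub_sub_self (by omega)]
  obtain ⟨m, rfl⟩ : ∃ m, n = m + 1 := ⟨n - 1, by omega⟩
  rw [sum_congr rfl hshell, ← mul_sum, hn, ← Nat.cast_inj (R := ℤ)]
  push_cast [hℓ]
  rw [← mul_sum, sub_one_mul_sum_quadraticCount he, show 2 * (m + 1) - 1 = 2 * m + 1 by omega]
  ring

namespace ZMod

theorem natCast_dvd_iff_castHom_eq_zero {m N : ℕ} [NeZero N] (h : m ∣ N) (x : ZMod N) :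
    (m : ZMod N) ∣ x ↔ castHom h (ZMod m) x = 0 := by
  constructor
  · rintro ⟨c, rfl⟩
    rw [map_mul, map_natCast, natCast_self, zero_mul]
  · intro hx
    rw [castHom_apply, cast_eq_val, natCast_eq_zero_iff] at hx
    obtain ⟨k, hk⟩ := hx
    exact ⟨k, by rw [← natCast_zmod_val x, hk]; push_cast; rfl⟩

theorem card_castHom_eq_zero {m N : ℕ} [NeZero N] (h : m ∣ N) :
    #{x : ZMod N | castHom h (ZMod m) x = 0} = N / m := by
  have hm : 0 < m := Nat.pos_of_ne_zero fun hm ↦ NeZero.ne N (Nat.eq_zero_of_zero_dvd (hm ▸ h))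
  have hker := (castHom h (ZMod m)).toAddMonoidHom.ker.card_mul_index
  rw [AddSubgroup.index_ker, AddMonoidHom.range_eq_top.mpr (castHom_surjective h),
    AddSubgroup.card_top, Nat.card_zmod, Nat.card_zmod] at hker
  rw [Nat.div_eq_of_eq_mul_left hm hker.symm, Nat.card_eq_fintype_card, Fintype.card_subtype]
  congr 1
  ext x
  simp only [mem_filter, mem_univ, true_and]
  exact Iff.rfl

variable {ℓ n : ℕ}

open Classical in
/-- The `ℓ`-adic valuation on `ZMod (ℓ ^ n)`, capped at `n`; in particular `padicVal ℓ n 0 = n`. -/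
noncomputable def padicVal (ℓ n : ℕ) (x : ZMod (ℓ ^ n)) : ℕ :=
  Nat.findGreatest (fun i ↦ (ℓ : ZMod (ℓ ^ n)) ^ i ∣ x) n

variable (x y : ZMod (ℓ ^ n))

open Classical in
theorem padicVal_le : padicVal ℓ n x ≤ n :=
  Nat.findGreatest_le n

open Classical in
theorem pow_padicVal_dvd : (ℓ : ZMod (ℓ ^ n)) ^ padicVal ℓ n x ∣ x :=
  Nat.findGreatest_spec (P := fun i ↦ (ℓ : ZMod (ℓ ^ n)) ^ i ∣ x) (Nat.zero_le n) (by simp)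

open Classical in
theorem pow_dvd_iff_le_padicVal {i : ℕ} (hi : i ≤ n) :
    (ℓ : ZMod (ℓ ^ n)) ^ i ∣ x ↔ i ≤ padicVal ℓ n x :=
  ⟨Nat.le_findGreatest (P := fun i ↦ (ℓ : ZMod (ℓ ^ n)) ^ i ∣ x) hi,
    fun h ↦ (pow_dvd_pow _ h).trans (pow_padicVal_dvd x)⟩

theorem padicVal_eq_of_forall {m : ℕ} (hm : m ≤ n)
    (h : ∀ i ≤ n, (ℓ : ZMod (ℓ ^ n)) ^ i ∣ x ↔ i ≤ m) : padicVal ℓ n x = m :=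
  le_antisymm ((h _ (padicVal_le x)).mp (pow_padicVal_dvd x))
    ((pow_dvd_iff_le_padicVal x hm).mp ((h m hm).mpr le_rfl))

theorem padicVal_eq_self_iff : padicVal ℓ n x = n ↔ x = 0 := by
  rw [le_antisymm_iff, and_iff_right (padicVal_le x), ← pow_dvd_iff_le_padicVal x le_rfl,
    ← Nat.cast_pow, natCast_self, zero_dvd_iff]

theorem padicVal_neg : padicVal ℓ n (-x) = padicVal ℓ n x :=
  padicVal_eq_of_forall _ (padicVal_le x) fun i hi ↦ by rw [dvd_neg, pow_dvd_iff_le_padicVal x hi]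

theorem min_le_padicVal_add : min (padicVal ℓ n x) (padicVal ℓ n y) ≤ padicVal ℓ n (x + y) := by
  rw [← pow_dvd_iff_le_padicVal _ ((min_le_left _ _).trans (padicVal_le x))]
  exact dvd_add ((pow_dvd_pow _ (min_le_left _ _)).trans (pow_padicVal_dvd x))
    ((pow_dvd_pow _ (min_le_right _ _)).trans (pow_padicVal_dvd y))

theorem padicVal_add_of_lt (h : padicVal ℓ n x < padicVal ℓ n y) :
    padicVal ℓ n (x + y) = padicVal ℓ n x := by
  have h₁ := min_le_padicVal_add x y
  have h₂ := min_le_padicVal_add (x + y) (-y)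
  rw [add_neg_cancel_right, padicVal_neg] at h₂
  omega

theorem min_le_padicVal_sub : min (padicVal ℓ n x) (padicVal ℓ n y) ≤ padicVal ℓ n (x - y) := by
  simpa [sub_eq_add_neg, padicVal_neg] using min_le_padicVal_add x (-y)

theorem padicVal_sub_of_ne (h : padicVal ℓ n x ≠ padicVal ℓ n y) :
    padicVal ℓ n (x - y) = min (padicVal ℓ n x) (padicVal ℓ n y) := by
  rw [sub_eq_add_neg]
  rw [← padicVal_neg y] at h ⊢
  rcases h.lt_or_gt with h | h
  · rw [padicVal_add_of_lt _ _ h, min_eq_left h.le]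
  · rw [add_comm, padicVal_add_of_lt _ _ h, min_eq_right h.le]

variable [Fact ℓ.Prime]

theorem pow_dvd_pow_iff_le {i k : ℕ} (hi : i ≤ n) :
    (ℓ : ZMod (ℓ ^ n)) ^ i ∣ (ℓ : ZMod (ℓ ^ n)) ^ k ↔ i ≤ k := by
  rw [← Nat.cast_pow, ← Nat.cast_pow, natCast_dvd_iff_castHom_eq_zero (pow_dvd_pow ℓ hi),
    map_natCast, natCast_eq_zero_iff, Nat.pow_dvd_pow_iff_le_right (Fact.out : ℓ.Prime).one_lt]

theorem padicVal_pow_mul_unit (k : ℕ) (u : (ZMod (ℓ ^ n))ˣ) :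
    padicVal ℓ n ((ℓ : ZMod (ℓ ^ n)) ^ k * u) = min k n :=
  padicVal_eq_of_forall _ (min_le_right _ _) fun i hi ↦ by
    rw [Units.dvd_mul_right, pow_dvd_pow_iff_le hi, le_min_iff]
    exact (and_iff_left hi).symm

theorem isUnit_of_not_dvd (h : ¬ (ℓ : ZMod (ℓ ^ n)) ∣ x) : IsUnit x := by
  rw [← natCast_zmod_val x, isUnit_iff_coprime]
  refine Nat.Coprime.pow_right _ <| Nat.Coprime.symm <|
    (Fact.out : ℓ.Prime).coprime_iff_not_dvd.mpr ?_
  rintro ⟨k, hk⟩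
  exact h ⟨k, by rw [← natCast_zmod_val x, hk, Nat.cast_mul]⟩

theorem exists_eq_pow_padicVal_mul_unit :
    ∃ u : (ZMod (ℓ ^ n))ˣ, x = (ℓ : ZMod (ℓ ^ n)) ^ padicVal ℓ n x * u := by
  obtain ⟨c, hc⟩ := pow_padicVal_dvd x
  rcases (padicVal_le x).lt_or_eq with hlt | heq
  · refine ⟨(isUnit_of_not_dvd c ?_).unit, hc⟩
    rintro ⟨d, rfl⟩
    have hdvd : (ℓ : ZMod (ℓ ^ n)) ^ (padicVal ℓ n x + 1) ∣ x :=
      ⟨d, by rw [pow_succ, mul_assoc]; exact hc⟩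
    rw [pow_dvd_iff_le_padicVal x hlt] at hdvd
    omega
  · refine ⟨1, ?_⟩
    rw [heq, ← Nat.cast_pow, natCast_self, zero_mul]
    exact (padicVal_eq_self_iff x).mp heq

theorem padicVal_mul : padicVal ℓ n (x * y) = min (padicVal ℓ n x + padicVal ℓ n y) n := by
  obtain ⟨u, hu⟩ := exists_eq_pow_padicVal_mul_unit x
  obtain ⟨w, hw⟩ := exists_eq_pow_padicVal_mul_unit y
  conv_lhs => rw [hu, hw, mul_mul_mul_comm, ← pow_add, ← Units.val_mul]
  exact padicVal_pow_mul_unit _ _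

theorem dvd_iff_padicVal_le : x ∣ y ↔ padicVal ℓ n x ≤ padicVal ℓ n y := by
  obtain ⟨u, hu⟩ := exists_eq_pow_padicVal_mul_unit x
  conv_lhs => rw [hu, Units.mul_right_dvd]
  exact pow_dvd_iff_le_padicVal y (padicVal_le x)

theorem card_le_padicVal {i : ℕ} (hi : i ≤ n) :
    #{x : ZMod (ℓ ^ n) | i ≤ padicVal ℓ n x} = ℓ ^ (n - i) := by
  simp_rw [← pow_dvd_iff_le_padicVal _ hi, ← Nat.cast_pow,
    natCast_dvd_iff_castHom_eq_zero (pow_dvd_pow ℓ hi)]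
  rw [card_castHom_eq_zero, Nat.pow_div hi (Fact.out : ℓ.Prime).pos]

theorem card_padicVal_eq {i : ℕ} (hi : i < n) :
    #{x : ZMod (ℓ ^ n) | padicVal ℓ n x = i} = ℓ ^ (n - i) - ℓ ^ (n - (i + 1)) := by
  rw [← card_le_padicVal hi.le, ← card_le_padicVal hi, ← card_sdiff_of_subset]
  · congr 1
    ext x
    simp only [mem_filter, mem_univ, true_and, mem_sdiff]
    omega
  · intro x
    simp only [mem_filter, mem_univ, true_and]
    omega

theorem card_padicVal_eq_self : #{x : ZMod (ℓ ^ n) | padicVal ℓ n x = n} = 1 := by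
  simp_rw [padicVal_eq_self_iff, filter_eq', mem_univ, if_true, card_singleton]

theorem card_mul_eq_zero : #{y : ZMod (ℓ ^ n) | x * y = 0} = ℓ ^ padicVal ℓ n x := by
  simp_rw [← padicVal_eq_self_iff (x * _), padicVal_mul]
  have hx := padicVal_le x
  rw [filter_congr fun y _ ↦ show min _ n = n ↔ n - padicVal ℓ n x ≤ padicVal ℓ n y by omega,
    card_le_padicVal (Nat.sub_le _ _), Nat.sub_sub_self hx]

theorem card_mul_eq_ite_padicVal_le (x y : ZMod (ℓ ^ n)) :
    #{z | x * z = y} = if padicVal ℓ n x ≤ padicVal ℓ n y then ℓ ^ padicVal ℓ n x else 0 := by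
  rw [card_mul_eq_ite_dvd, card_mul_eq_zero]
  exact if_congr (dvd_iff_padicVal_le x y) rfl rfl

theorem sum_padicVal {M : Type*} [AddCommMonoid M] (g : ℕ → M) :
    ∑ x : ZMod (ℓ ^ n), g (padicVal ℓ n x) =
      ∑ j ∈ range n, (ℓ ^ (n - j) - ℓ ^ (n - (j + 1))) • g j + g n := by
  have hfib : ∀ j, ∑ x with padicVal ℓ n x = j, g (padicVal ℓ n x) =
      #{x : ZMod (ℓ ^ n) | padicVal ℓ n x = j} • g j := fun j ↦ by
    rw [sum_congr rfl fun x hx ↦ by rw [(mem_filter.mp hx).2], sum_const]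
  rw [← sum_fiberwise_of_maps_to (t := range (n + 1))
      fun x _ ↦ mem_range.mpr (Nat.lt_succ_of_le (padicVal_le x)),
    sum_range_succ, hfib, card_padicVal_eq_self, one_smul]
  exact congrArg (· + g n) <| sum_congr rfl fun j hj ↦ by
    rw [hfib, card_padicVal_eq (mem_range.mp hj)]

variable {τ : ZMod (ℓ ^ n)}

theorem le_padicVal_mul_sub_iff_of_le {j : ℕ} (hj : j ≤ 2 * padicVal ℓ n τ) (hjn : j ≤ n)
    (a : ZMod (ℓ ^ n)) :
    j ≤ padicVal ℓ n (a * (τ - a)) ↔ (j + 1) / 2 ≤ padicVal ℓ n a := by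
  have h₁ := min_le_padicVal_sub τ a
  have h₂ := padicVal_sub_of_ne τ a
  rw [padicVal_mul]
  by_cases h : padicVal ℓ n τ = padicVal ℓ n a
  · omega
  · have := h₂ h
    omega

theorem le_padicVal_mul_sub_iff_of_lt {j : ℕ} (hj : 2 * padicVal ℓ n τ < j) (hjn : j ≤ n)
    (a : ZMod (ℓ ^ n)) : j ≤ padicVal ℓ n (a * (τ - a)) ↔
      j - padicVal ℓ n τ ≤ padicVal ℓ n a ∨ j - padicVal ℓ n τ ≤ padicVal ℓ n (τ - a) := by
  have h₁ := min_le_padicVal_sub τ a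
  have h₂ := padicVal_sub_of_ne τ a
  rw [padicVal_mul]
  by_cases h : padicVal ℓ n τ = padicVal ℓ n a
  · omega
  · have := h₂ h
    omega

theorem card_le_padicVal_mul_sub {j : ℕ} (hj : j ≤ n) :
    #{a : ZMod (ℓ ^ n) | j ≤ padicVal ℓ n (a * (τ - a))} =
      quadraticCount ℓ n (padicVal ℓ n τ) j := by
  rw [quadraticCount]
  split_ifs with hje
  · simp_rw [le_padicVal_mul_sub_iff_of_le hje hj]
    exact card_le_padicVal (by omega)
  · simp_rw [le_padicVal_mul_sub_iff_of_lt (not_le.mp hje) hj]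
    set k := j - padicVal ℓ n τ
    have hk : k ≤ n := by omega
    have hsub : #{a : ZMod (ℓ ^ n) | k ≤ padicVal ℓ n (τ - a)} = ℓ ^ (n - k) := by
      rw [← card_le_padicVal hk]
      exact card_equiv (Equiv.subLeft τ) fun a ↦ by simp
    rw [filter_or, card_union_of_disjoint (disjoint_filter.mpr fun a _ ha hτa ↦ ?_),
      card_le_padicVal hk, hsub, two_mul]
    have := min_le_padicVal_add a (τ - a)
    rw [add_sub_cancel] at this
    omega

theorem card_det_eq_zero_trace_eq (hτ : τ * τ ≠ 0) :
    Nat.card {M : Matrix (Fin 2) (Fin 2) (ZMod (ℓ ^ n)) // M.det = 0 ∧ M.trace = τ} =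
      ℓ ^ (2 * n) + ℓ ^ (2 * n - 1) := by
  have hτn : 2 * padicVal ℓ n τ < n := by
    have := padicVal_mul τ τ
    rw [Ne, ← padicVal_eq_self_iff] at hτ
    omega
  rw [Matrix.card_det_eq_zero_trace_eq_sum]
  simp_rw [card_mul_eq_ite_padicVal_le, ← sum_filter, sum_const, smul_eq_mul]
  rw [sum_padicVal fun j ↦ #{a : ZMod (ℓ ^ n) | j ≤ padicVal ℓ n (a * (τ - a))} * ℓ ^ j,
    sum_congr rfl fun j hj ↦ by rw [card_le_padicVal_mul_sub (mem_range.mp hj).le],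
    card_le_padicVal_mul_sub le_rfl]
  exact sum_shells_mul_quadraticCount (Fact.out : ℓ.Prime).one_lt.le hτn

end ZMod

theorem stmt3_general (ℓ : ℕ) (hℓ : ℓ.Prime) (h3 : 3 ≤ ℓ) (n : ℕ)
    (q t : ZMod (ℓ ^ n))
    (hsq : IsSquare (t ^ 2 - 4 * q)) (hne : t ^ 2 - 4 * q ≠ 0) :
    Nat.card {M : Matrix (Fin 2) (Fin 2) (ZMod (ℓ ^ n)) //
        M.det = q ∧ M.trace = t} = ℓ ^ (2 * n) + ℓ ^ (2 * n - 1) := by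
  have : Fact ℓ.Prime := ⟨hℓ⟩
  obtain ⟨δ, hδ⟩ := hsq
  have h2 : IsUnit (2 : ZMod (ℓ ^ n)) := by
    exact_mod_cast (ZMod.isUnit_iff_coprime 2 (ℓ ^ n)).mpr
      (Nat.Coprime.pow_right n ((Nat.coprime_primes Nat.prime_two hℓ).mpr (by omega)))
  obtain ⟨h, hh⟩ := h2.exists_right_inv
  rw [Matrix.card_det_trace_eq_card_det_zero (β := (t - δ) * h)
      (by linear_combination (-h ^ 2) * hδ + (t * (t - δ) * h - q * (2 * h + 1)) * hh),
    show t - 2 * ((t - δ) * h) = δ by linear_combination -(t - δ) * hh]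
  exact ZMod.card_det_eq_zero_trace_eq (hδ ▸ hne)

/-- Number of matrices in `GL₂(Z/ℓ^n)` with determinant `q` and trace `t`, when
`Δ = t² - 4q` is a nonzero square. -/
theorem stmt3 (ℓ : ℕ) (hℓ : ℓ.Prime) (h3 : 3 ≤ ℓ) (n : ℕ) (hn : 1 ≤ n)
    (q t : ZMod (ℓ ^ n)) (hq : IsUnit q)
    (hsq : IsSquare (t ^ 2 - 4 * q)) (hne : t ^ 2 - 4 * q ≠ 0) :
    Nat.card {M : Matrix (Fin 2) (Fin 2) (ZMod (ℓ ^ n)) //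
        M.det = q ∧ M.trace = t} = ℓ ^ (2 * n) + ℓ ^ (2 * n - 1) :=
  stmt3_general ℓ hℓ h3 n q t hsq hne
end

section
/- Let ℓ ≥ 3 be a prime, n ≥ 1 an integer, and Δ ∈ Z/ℓ^n an element of odd ℓ-adic valuation k < n. Then the number of triples (x,y,z) ∈ (Z/ℓ^n)³ with xy = z² − Δ equals ℓ^{2n} + ℓ^{2n−1} − (ℓ+1)ℓ^{2n−(k+3)/2}. -/
/-!
For `x` of `ℓ`-adic valuation `a`, the map `y ↦ x * y` hits exactly the multiples of `ℓ ^ a`,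
each `ℓ ^ a` times, so the count is `∑ₓ ℓ ^ v(x) · #{z | ℓ ^ v(x) ∣ z² - Δ}`. Since `v(z²)` is even
and `v(Δ) = k` is odd, `ℓ ^ a ∣ z² - Δ` is impossible for `a > k`, while for `a ≤ k` it means
`ℓ ^ ⌈a/2⌉ ∣ z`. There are `(ℓ - 1) ℓ ^ (n - a - 1)` elements of valuation `a < n`, and the
resulting sum over `a ≤ k` telescopes in pairs `a = 2i, 2i + 1`.
-/

open Finset

namespace ZMod

variable {N d : ℕ}

theorem natCast_dvd_natCast_iff [NeZero N] (hd : d ∣ N) (w : ℕ) :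
    (d : ZMod N) ∣ (w : ZMod N) ↔ d ∣ w := by
  refine ⟨fun ⟨c, hc⟩ => ?_, fun ⟨c, hc⟩ => ⟨c, by rw [hc, Nat.cast_mul]⟩⟩
  rw [← natCast_zmod_val c, ← Nat.cast_mul, natCast_eq_natCast_iff] at hc
  exact (hc.dvd_iff hd).mpr (dvd_mul_right _ _)

theorem natCast_dvd_iff_dvd_val [NeZero N] (hd : d ∣ N) (z : ZMod N) :
    (d : ZMod N) ∣ z ↔ d ∣ z.val := by
  conv_lhs => rw [← natCast_zmod_val z]
  exact natCast_dvd_natCast_iff hd z.val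

theorem card_filter_val [NeZero N] (P : ℕ → Prop) [DecidablePred P] :
    #{z : ZMod N | P z.val} = #{x ∈ range N | P x} := by
  refine card_nbij' val (fun x => (x : ZMod N)) ?_ ?_ ?_ ?_
  · intro z hz
    simp_all [val_lt]
  · intro x hx
    simp_all [val_natCast, Nat.mod_eq_of_lt]
  · intro z _
    exact natCast_zmod_val z
  · intro x hx
    simp_all [val_natCast, Nat.mod_eq_of_lt]

theorem card_dvd_val [NeZero N] (hd : d ∣ N) : #{z : ZMod N | d ∣ z.val} = N / d := by
  rcases Nat.eq_zero_or_pos d with rfl | hd0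
  · simp [NeZero.ne N] at hd
  have := Nat.count_modEq_card N hd0 0
  simp_all [Nat.count_eq_card_filter_range, card_filter_val, Nat.modEq_zero_iff_dvd,
    Nat.mod_eq_zero_of_dvd hd]

theorem card_natCast_dvd [NeZero N] (hd : d ∣ N) :
    #{z : ZMod N | (d : ZMod N) ∣ z} = N / d := by
  simp_rw [natCast_dvd_iff_dvd_val hd, card_dvd_val hd]

theorem card_natCast_mul_eq_zero [NeZero N] (hd : d ∣ N) :
    #{y : ZMod N | (d : ZMod N) * y = 0} = d := by
  obtain ⟨e, rfl⟩ := hd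
  obtain ⟨hd0, he⟩ := mul_ne_zero_iff.mp (NeZero.ne (d * e))
  have key : ∀ y : ZMod (d * e), (d : ZMod (d * e)) * y = 0 ↔ e ∣ y.val := by
    intro y
    rw [← natCast_zmod_val y, ← Nat.cast_mul, natCast_eq_zero_iff, val_natCast_of_lt (val_lt y)]
    exact Nat.mul_dvd_mul_iff_left (Nat.pos_of_ne_zero hd0)
  simp_rw [key, card_dvd_val (Dvd.intro_left d rfl), Nat.mul_div_cancel _ (Nat.pos_of_ne_zero he)]

end ZMod

theorem card_filter_mul_eq {R : Type*} [CommRing R] [Fintype R] [DecidableEq R] (x c : R) :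
    #{y | x * y = c} = if x ∣ c then #{y | x * y = 0} else 0 := by
  split_ifs with h
  · obtain ⟨d, rfl⟩ := h
    exact AddMonoidHom.card_fiber_eq_of_mem_range (AddMonoidHom.mulLeft x) ⟨d, rfl⟩ ⟨0, mul_zero x⟩
  · exact card_eq_zero.mpr (filter_eq_empty_iff.mpr fun y _ hy => h ⟨y, hy.symm⟩)

theorem Nat.Prime.pow_dvd_sq_iff {p a w : ℕ} (hp : p.Prime) :
    p ^ a ∣ w ^ 2 ↔ p ^ ((a + 1) / 2) ∣ w := by
  have : Fact p.Prime := ⟨hp⟩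
  rcases eq_or_ne w 0 with rfl | hw
  · simp
  rw [padicValNat_dvd_iff_le (pow_ne_zero 2 hw), padicValNat_dvd_iff_le hw, padicValNat.pow w 2]
  omega

/-- `0` gets valuation `n`, so that every `x` is associated to `ℓ ^ padicValZMod ℓ n x`. -/
def padicValZMod (ℓ n : ℕ) (x : ZMod (ℓ ^ n)) : ℕ :=
  if x = 0 then n else padicValNat ℓ x.val

section padicValZMod

variable {ℓ n : ℕ} [hℓ : Fact ℓ.Prime]

theorem padicValZMod_le (x : ZMod (ℓ ^ n)) : padicValZMod ℓ n x ≤ n := by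
  unfold padicValZMod
  split_ifs with hx
  · exact le_rfl
  · exact (Nat.pow_le_pow_iff_right hℓ.out.one_lt).mp <|
      (Nat.le_of_dvd (ZMod.val_pos.mpr hx) pow_padicValNat_dvd).trans (ZMod.val_lt x).le

theorem natCast_pow_dvd_iff_le_padicValNat {a : ℕ} (ha : a ≤ n) {x : ZMod (ℓ ^ n)} (hx : x ≠ 0) :
    (ℓ : ZMod (ℓ ^ n)) ^ a ∣ x ↔ a ≤ padicValNat ℓ x.val := by
  rw [← Nat.cast_pow, ZMod.natCast_dvd_iff_dvd_val (pow_dvd_pow ℓ ha),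
    padicValNat_dvd_iff_le ((ZMod.val_ne_zero x).mpr hx)]

theorem associated_pow_padicValZMod (x : ZMod (ℓ ^ n)) :
    Associated ((ℓ : ZMod (ℓ ^ n)) ^ padicValZMod ℓ n x) x := by
  unfold padicValZMod
  split_ifs with hx
  · rw [hx, ← Nat.cast_pow, ZMod.natCast_self]
  have hw : x.val ≠ 0 := (ZMod.val_ne_zero x).mpr hx
  have hcop : (x.val / ℓ ^ padicValNat ℓ x.val).Coprime (ℓ ^ n) := by
    refine (Nat.Coprime.pow_left n ((hℓ.out.coprime_iff_not_dvd).mpr ?_)).symm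
    rw [← Nat.factorization_def _ hℓ.out]
    exact Nat.not_dvd_ordCompl hℓ.out hw
  refine ⟨ZMod.unitOfCoprime _ hcop, ?_⟩
  rw [ZMod.coe_unitOfCoprime, ← Nat.cast_pow, ← Nat.cast_mul,
    Nat.mul_div_cancel' pow_padicValNat_dvd, ZMod.natCast_zmod_val]

theorem padicValZMod_eq_iff {a : ℕ} (ha : a < n) (x : ZMod (ℓ ^ n)) :
    padicValZMod ℓ n x = a ↔
      (ℓ : ZMod (ℓ ^ n)) ^ a ∣ x ∧ ¬(ℓ : ZMod (ℓ ^ n)) ^ (a + 1) ∣ x := by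
  unfold padicValZMod
  split_ifs with hx
  · simp [hx, ha.ne']
  rw [natCast_pow_dvd_iff_le_padicValNat ha.le hx, natCast_pow_dvd_iff_le_padicValNat ha hx]
  omega

theorem card_padicValZMod_eq {a : ℕ} (ha : a < n) :
    #{x : ZMod (ℓ ^ n) | padicValZMod ℓ n x = a} = (ℓ - 1) * ℓ ^ (n - a - 1) := by
  rw [filter_congr fun x _ => padicValZMod_eq_iff ha x, filter_and_not,
    card_sdiff_of_subset (monotone_filter_right _ fun _ _ => (pow_dvd_pow _ a.le_succ).trans)]
  simp_rw [← Nat.cast_pow, ZMod.card_natCast_dvd (pow_dvd_pow ℓ ha.le),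
    ZMod.card_natCast_dvd (pow_dvd_pow ℓ ha), Nat.pow_div ha.le hℓ.out.pos,
    Nat.pow_div ha hℓ.out.pos]
  rw [show n - a = n - (a + 1) + 1 by omega, pow_succ, ← Nat.mul_sub_one, mul_comm]
  rfl

theorem card_filter_mul_eq_padicValZMod (x c : ZMod (ℓ ^ n)) :
    #{y | x * y = c} =
      if (ℓ : ZMod (ℓ ^ n)) ^ padicValZMod ℓ n x ∣ c then ℓ ^ padicValZMod ℓ n x else 0 := by
  have hx := associated_pow_padicValZMod x
  have hker : #{y | x * y = 0} = ℓ ^ padicValZMod ℓ n x := by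
    obtain ⟨u, hu⟩ := hx
    rw [filter_congr fun y _ => by rw [← hu, mul_right_comm, Units.mul_left_eq_zero],
      ← Nat.cast_pow, ZMod.card_natCast_mul_eq_zero (pow_dvd_pow ℓ (padicValZMod_le x))]
  rw [card_filter_mul_eq, hker]
  simp only [← hx.dvd_iff_dvd_left]

theorem sum_card_filter_mul_eq_padicValZMod (x : ZMod (ℓ ^ n)) (c : ZMod (ℓ ^ n) → ZMod (ℓ ^ n)) :
    ∑ z, #{y | x * y = c z} =
      ℓ ^ padicValZMod ℓ n x * #{z | (ℓ : ZMod (ℓ ^ n)) ^ padicValZMod ℓ n x ∣ c z} := by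
  simp_rw [card_filter_mul_eq_padicValZMod]
  rw [← sum_filter, sum_const, smul_eq_mul, mul_comm]

theorem pow_dvd_sq_iff {a : ℕ} (ha : a ≤ n) (z : ZMod (ℓ ^ n)) :
    (ℓ : ZMod (ℓ ^ n)) ^ a ∣ z ^ 2 ↔ ℓ ^ ((a + 1) / 2) ∣ z.val := by
  conv_lhs => rw [← ZMod.natCast_zmod_val z]
  rw [← Nat.cast_pow, ← Nat.cast_pow, ZMod.natCast_dvd_natCast_iff (pow_dvd_pow ℓ ha),
    hℓ.out.pow_dvd_sq_iff]

end padicValZMod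

theorem Finset.sum_comp_eq_sum_range {α M : Type*} [Fintype α] [AddCommMonoid M] (g : α → ℕ)
    (f : ℕ → M) {k : ℕ} (hf : ∀ a, k < a → f a = 0) :
    ∑ x, f (g x) = ∑ a ∈ range (k + 1), #{x | g x = a} • f a := by
  have hx : ∀ x, f (g x) = ∑ a ∈ range (k + 1), if g x = a then f a else 0 := by
    intro x
    rw [sum_ite_eq]
    split_ifs with h
    · rfl
    · exact hf _ (by simpa using h)
  simp_rw [hx]
  rw [sum_comm]
  simp_rw [← sum_filter, sum_const]

theorem natCard_triples_eq_sum {α β γ : Type*} [Fintype α] [Fintype β] [Fintype γ]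
    (P : α → β → γ → Prop) [∀ x y z, Decidable (P x y z)] :
    Nat.card {p : α × β × γ // P p.1 p.2.1 p.2.2} = ∑ x, ∑ z, #{y | P x y z} := by
  rw [Nat.card_eq_fintype_card, Fintype.card_subtype, card_filter, Fintype.sum_prod_type]
  simp_rw [Fintype.sum_prod_type, card_filter]
  exact sum_congr rfl fun x _ => sum_comm

section discriminant

variable {ℓ n k : ℕ} [hℓ : Fact ℓ.Prime] {Δ : ZMod (ℓ ^ n)} (hΔ : Δ ≠ 0)
  (hk : k = padicValNat ℓ Δ.val) (hkn : k < n)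
include hΔ hk hkn

theorem card_pow_dvd_sq_sub_of_le {a : ℕ} (ha : a ≤ k) :
    #{z : ZMod (ℓ ^ n) | (ℓ : ZMod (ℓ ^ n)) ^ a ∣ z ^ 2 - Δ} = ℓ ^ (n - (a + 1) / 2) := by
  have hΔa : (ℓ : ZMod (ℓ ^ n)) ^ a ∣ Δ :=
    (natCast_pow_dvd_iff_le_padicValNat (by omega) hΔ).mpr (hk ▸ ha)
  simp_rw [dvd_sub_left hΔa, pow_dvd_sq_iff (ha.trans hkn.le)]
  rw [ZMod.card_dvd_val (pow_dvd_pow ℓ (by omega)), Nat.pow_div (by omega) hℓ.out.pos]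

theorem card_pow_dvd_sq_sub_of_lt (hodd : Odd k) {a : ℕ} (ha : k < a) :
    #{z : ZMod (ℓ ^ n) | (ℓ : ZMod (ℓ ^ n)) ^ a ∣ z ^ 2 - Δ} = 0 := by
  refine card_eq_zero.mpr (filter_eq_empty_iff.mpr fun z _ hz => ?_)
  have hk1 : (ℓ : ZMod (ℓ ^ n)) ^ (k + 1) ∣ z ^ 2 - Δ := (pow_dvd_pow _ ha).trans hz
  have hΔk : (ℓ : ZMod (ℓ ^ n)) ^ k ∣ Δ :=
    (natCast_pow_dvd_iff_le_padicValNat hkn.le hΔ).mpr hk.le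
  have hzk : (ℓ : ZMod (ℓ ^ n)) ^ k ∣ z ^ 2 :=
    (dvd_sub_left hΔk).mp ((pow_dvd_pow _ k.le_succ).trans hk1)
  have hzk1 : (ℓ : ZMod (ℓ ^ n)) ^ (k + 1) ∣ z ^ 2 := by
    rw [pow_dvd_sq_iff hkn.le] at hzk
    rwa [pow_dvd_sq_iff hkn, show (k + 1 + 1) / 2 = (k + 1) / 2 by grind]
  have := (dvd_sub_right hzk1).mp hk1
  rw [natCast_pow_dvd_iff_le_padicValNat hkn hΔ] at this
  omega

theorem natCard_solutions_eq_sum_range (hodd : Odd k) :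
    Nat.card {p : ZMod (ℓ ^ n) × ZMod (ℓ ^ n) × ZMod (ℓ ^ n) // p.1 * p.2.1 = p.2.2 ^ 2 - Δ} =
      ∑ a ∈ range (k + 1), (ℓ - 1) * ℓ ^ (2 * n - 1 - (a + 1) / 2) := by
  have hterm : ∀ a ∈ range (k + 1), #{x | padicValZMod ℓ n x = a} •
      (ℓ ^ a * #{z : ZMod (ℓ ^ n) | (ℓ : ZMod (ℓ ^ n)) ^ a ∣ z ^ 2 - Δ}) =
        (ℓ - 1) * ℓ ^ (2 * n - 1 - (a + 1) / 2) := by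
    intro a ha
    rw [mem_range] at ha
    rw [card_padicValZMod_eq (by omega), card_pow_dvd_sq_sub_of_le hΔ hk hkn (by omega),
      smul_eq_mul, mul_assoc, ← pow_add, ← pow_add]
    congr 2
    omega
  rw [natCard_triples_eq_sum fun x y z => x * y = z ^ 2 - Δ,
    sum_congr rfl fun x _ => sum_card_filter_mul_eq_padicValZMod x fun z => z ^ 2 - Δ,
    sum_comp_eq_sum_range (padicValZMod ℓ n)
      (fun a => ℓ ^ a * #{z | (ℓ : ZMod (ℓ ^ n)) ^ a ∣ z ^ 2 - Δ})
      fun a ha => by rw [card_pow_dvd_sq_sub_of_lt hΔ hk hkn hodd ha, mul_zero],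
    sum_congr rfl hterm]

end discriminant

theorem sum_range_two_mul_pow {R : Type*} [CommRing R] (q : R) {N j : ℕ} (hj : j ≤ N) :
    ∑ a ∈ range (2 * j), (q - 1) * q ^ (N - (a + 1) / 2) =
      q ^ (N + 1) + q ^ N - (q + 1) * q ^ (N - j) := by
  induction j with
  | zero => simp; ring
  | succ j ih =>
    rw [show 2 * (j + 1) = 2 * j + 1 + 1 by ring, sum_range_succ, sum_range_succ, ih (by omega),
      show (2 * j + 1) / 2 = j by omega, show (2 * j + 1 + 1) / 2 = j + 1 by omega,
      show N - j = N - (j + 1) + 1 by omega]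
    ring

theorem stmt4_general (ℓ : ℕ) (hℓ : ℓ.Prime) (n : ℕ)
    (Δ : ZMod (ℓ ^ n)) (hΔ : Δ ≠ 0) (k : ℕ) (hk : k = padicValNat ℓ Δ.val)
    (hodd : Odd k) (hkn : k < n) :
    (Nat.card {p : ZMod (ℓ ^ n) × ZMod (ℓ ^ n) × ZMod (ℓ ^ n) //
        p.1 * p.2.1 = p.2.2 ^ 2 - Δ} : ℤ) =
      ℓ ^ (2 * n) + ℓ ^ (2 * n - 1) - (ℓ + 1) * ℓ ^ (2 * n - (k + 3) / 2) := by
  have : Fact ℓ.Prime := ⟨hℓ⟩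
  rw [natCard_solutions_eq_sum_range hΔ hk hkn hodd]
  obtain ⟨m, rfl⟩ := hodd
  push_cast [Nat.cast_sub hℓ.one_le]
  rw [show 2 * m + 1 + 1 = 2 * (m + 1) by ring, sum_range_two_mul_pow _ (by omega),
    show 2 * n - 1 + 1 = 2 * n by omega,
    show 2 * n - (2 * m + 1 + 3) / 2 = 2 * n - 1 - (m + 1) by omega]

/-- Number of solutions of `x y = z² - Δ` over `Z/ℓ^n` when `Δ` has odd valuation `k < n`. -/
theorem stmt4 (ℓ : ℕ) (hℓ : ℓ.Prime) (h3 : 3 ≤ ℓ) (n : ℕ) (hn : 1 ≤ n)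
    (Δ : ZMod (ℓ ^ n)) (hΔ : Δ ≠ 0) (k : ℕ) (hk : k = padicValNat ℓ Δ.val)
    (hodd : Odd k) (hkn : k < n) :
    (Nat.card {p : ZMod (ℓ ^ n) × ZMod (ℓ ^ n) × ZMod (ℓ ^ n) //
        p.1 * p.2.1 = p.2.2 ^ 2 - Δ} : ℤ) =
      ℓ ^ (2 * n) + ℓ ^ (2 * n - 1) - (ℓ + 1) * ℓ ^ (2 * n - (k + 3) / 2) :=
  stmt4_general ℓ hℓ n Δ hΔ k hk hodd hkn
end

section
/- Let ℓ ≥ 3 be a prime and n ≥ 1 an even integer. Then the number of triples (x,y,z) ∈ (Z/ℓ^n)³ with xy = z² equals ℓ^{2n} + ℓ^{2n−1} − ℓ^{3n/2−1}. If instead n is odd, the number of such triples equals ℓ^{2n} + ℓ^{2n−1} − ℓ^{(3n−1)/2}. -/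
/-!
Sort the solutions of `x y = z²` over a finite commutative ring by which of `x`, `y` are units.
If `x` is a unit, `z` is free and `y = x⁻¹ z²`; if `x` is not but `y` is, `z` must be a nonunit
and `x = z² y⁻¹`. Over `ℤ/ℓ^(m+2)` the nonunits are `ℓ · (ℤ/ℓ^(m+1))`, and when `x`, `y` (hence
`z`) are all nonunits, cancelling `ℓ²` turns the equation into the same one modulo `ℓ^m`, each
solution of which lifts to `ℓ³` triples modulo `ℓ^(m+1)`. Hence
`N(m+2) = φ(ℓ^(m+2)) (ℓ^(m+2) + ℓ^(m+1)) + ℓ³ N(m)`, and with `N(0) = 1`, `N(1) = ℓ²` this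
recursion solves to the closed form.
-/

open Function Set

def cone (M : Type*) [CommMonoid M] : Set (M × M × M) := {p | p.1 * p.2.1 = p.2.2 ^ 2}

theorem card_preimage_mul_card_of_surjective {F G H : Type*} [AddGroup G] [AddGroup H]
    [FunLike F G H] [AddMonoidHomClass F G H] (f : F) (hf : Surjective f) (t : Set H) :
    Nat.card (f ⁻¹' t) * Nat.card H = Nat.card t * Nat.card G := by
  let e := QuotientAddGroup.quotientKerEquivOfSurjective (f : G →+ H) hf
  have card_preimage (s : Set H) :
      Nat.card (f ⁻¹' s) = Nat.card (AddMonoidHom.ker (f : G →+ H)) * Nat.card s := by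
    rw [show f ⁻¹' s = QuotientAddGroup.mk ⁻¹' (e ⁻¹' s) from rfl,
      Nat.card_congr (QuotientAddGroup.preimageMkEquivAddSubgroupProdSet _ _), Nat.card_prod,
      Nat.card_preimage_of_injective e.injective (by simp [e.surjective.range_eq])]
  have card_univ := card_preimage univ
  rw [preimage_univ, Nat.card_univ, Nat.card_univ] at card_univ
  rw [card_preimage, card_univ]
  ring

section CommMonoid

variable {M : Type*} [CommMonoid M]

theorem not_isUnit_of_mul_eq_sq {x y z : M} (h : x * y = z ^ 2) (hx : ¬IsUnit x) : ¬IsUnit z :=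
  fun hz => hx (isUnit_of_mul_isUnit_left (h ▸ hz.pow 2))

theorem cone_inter_isUnit_fst :
    cone M ∩ {p | IsUnit p.1} = range fun q : Mˣ × M => ((q.1 : M), ↑q.1⁻¹ * q.2 ^ 2, q.2) := by
  ext ⟨x, y, z⟩
  simp only [cone, mem_inter_iff, mem_ofPred_eq, mem_range, Prod.exists, Prod.mk.injEq]
  constructor
  · rintro ⟨h, u, rfl⟩
    exact ⟨u, z, rfl, by rw [← h, Units.inv_mul_cancel_left], rfl⟩
  · rintro ⟨u, z, rfl, rfl, rfl⟩
    exact ⟨Units.mul_inv_cancel_left u _, u.isUnit⟩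

theorem cone_inter_isUnit_snd :
    cone M ∩ {p | ¬IsUnit p.1 ∧ IsUnit p.2.1} =
      range fun q : Mˣ × nonunits M => ((q.2 : M) ^ 2 * ↑q.1⁻¹, (q.1 : M), (q.2 : M)) := by
  ext ⟨x, y, z⟩
  simp only [mem_inter_iff, mem_ofPred_eq, mem_range, Prod.exists, Prod.mk.injEq,
    Subtype.exists, mem_nonunits_iff]
  constructor
  · rintro ⟨h, hx, u, rfl⟩
    exact ⟨u, z, not_isUnit_of_mul_eq_sq h hx, by rw [← h, Units.mul_inv_cancel_right], rfl, rfl⟩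
  · rintro ⟨u, z, hz, rfl, rfl, rfl⟩
    refine ⟨Units.inv_mul_cancel_right _ u, fun hx => hz ?_, u.isUnit⟩
    exact (isUnit_pow_iff two_ne_zero).mp (by simpa using hx.mul u.isUnit)

theorem ncard_cone [Finite M] :
    (cone M).ncard = Nat.card Mˣ * Nat.card M + Nat.card Mˣ * (nonunits M).ncard +
      (cone M ∩ {p | ¬IsUnit p.1 ∧ ¬IsUnit p.2.1}).ncard := by
  have split₁ := ncard_inter_add_ncard_sdiff_eq_ncard (cone M) {p | IsUnit p.1}
  have split₂ :=
    ncard_inter_add_ncard_sdiff_eq_ncard (cone M \ {p | IsUnit p.1}) {p | IsUnit p.2.1}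
  have h₂ : cone M \ {p | IsUnit p.1} ∩ {p | IsUnit p.2.1} =
      cone M ∩ {p | ¬IsUnit p.1 ∧ IsUnit p.2.1} := by ext; simp [and_assoc]
  have h₃ : (cone M \ {p | IsUnit p.1}) \ {p | IsUnit p.2.1} =
      cone M ∩ {p | ¬IsUnit p.1 ∧ ¬IsUnit p.2.1} := by ext; simp [and_assoc]
  rw [h₂, h₃, cone_inter_isUnit_snd, ncard_range_of_injective fun _ _ h =>
    Prod.ext (Units.ext (congrArg (·.2.1) h)) (Subtype.ext (congrArg (·.2.2) h))] at split₂
  rw [← split₁, ← split₂, cone_inter_isUnit_fst, ncard_range_of_injective fun _ _ h =>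
    Prod.ext (Units.ext (congrArg (·.1) h)) (congrArg (·.2.2) h), Nat.card_prod, Nat.card_prod,
    Nat.card_coe_set_eq, add_assoc]

end CommMonoid

theorem ncard_cone_of_commGroupWithZero {K : Type*} [CommGroupWithZero K] [Finite K] :
    (cone K).ncard = Nat.card K ^ 2 := by
  have hnonunits : nonunits K = {0} := by
    ext; simp [mem_nonunits_iff, isUnit_iff_ne_zero]
  have hcore : cone K ∩ {p | ¬IsUnit p.1 ∧ ¬IsUnit p.2.1} = {0} := by
    ext ⟨x, y, z⟩
    simp only [cone, mem_inter_iff, mem_ofPred_eq, isUnit_iff_ne_zero, not_not,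
      mem_singleton_iff, Prod.mk_eq_zero]
    constructor
    · rintro ⟨h, rfl, rfl⟩
      exact ⟨rfl, rfl, pow_eq_zero_iff two_ne_zero |>.mp (by rw [← h, zero_mul])⟩
    · rintro ⟨rfl, rfl, rfl⟩
      simp
  rw [ncard_cone, hnonunits, hcore, ncard_singleton, ncard_singleton, Nat.card_units]
  obtain ⟨q, hq⟩ : ∃ q, Nat.card K = q + 1 := ⟨_, (Nat.succ_pred_eq_of_pos Nat.card_pos).symm⟩
  rw [hq, Nat.add_sub_cancel]
  ring

section ZModPrimePow

def shift (ℓ k : ℕ) (a : ZMod (ℓ ^ k)) : ZMod (ℓ ^ (k + 1)) :=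
  ((ℓ * a.val : ℕ) : ZMod (ℓ ^ (k + 1)))

def reduce (ℓ m : ℕ) : ZMod (ℓ ^ (m + 1)) →+* ZMod (ℓ ^ m) :=
  ZMod.castHom (pow_dvd_pow ℓ m.le_succ) _

variable {ℓ : ℕ}

theorem val_shift (hℓ : ℓ ≠ 0) {k : ℕ} (a : ZMod (ℓ ^ k)) : (shift ℓ k a).val = ℓ * a.val := by
  have : NeZero (ℓ ^ k) := ⟨pow_ne_zero _ hℓ⟩
  refine ZMod.val_cast_of_lt ?_
  rw [pow_succ']
  exact Nat.mul_lt_mul_of_pos_left a.val_lt (Nat.pos_of_ne_zero hℓ)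

theorem shift_injective (hℓ : ℓ ≠ 0) (k : ℕ) : Injective (shift ℓ k) := by
  have : NeZero (ℓ ^ k) := ⟨pow_ne_zero _ hℓ⟩
  intro a b h
  have := congrArg ZMod.val h
  rw [val_shift hℓ, val_shift hℓ] at this
  exact ZMod.val_injective _ (Nat.eq_of_mul_eq_mul_left (Nat.pos_of_ne_zero hℓ) this)

theorem range_shift (hℓ : ℓ.Prime) (k : ℕ) :
    range (shift ℓ k) = nonunits (ZMod (ℓ ^ (k + 1))) := by
  have : NeZero (ℓ ^ (k + 1)) := ⟨pow_ne_zero _ hℓ.ne_zero⟩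
  ext x
  rw [mem_nonunits_iff]
  conv_rhs => rw [← ZMod.natCast_zmod_val x, ZMod.isUnit_natCast_iff_not_dvd_pow hℓ k.succ_pos,
    not_not]
  constructor
  · rintro ⟨a, rfl⟩
    exact ⟨a.val, val_shift hℓ.ne_zero a⟩
  · rintro ⟨q, hq⟩
    have hlt : q < ℓ ^ k := by
      have := x.val_lt
      rw [hq, pow_succ'] at this
      exact Nat.lt_of_mul_lt_mul_left this
    refine ⟨q, ?_⟩
    rw [shift, ZMod.val_cast_of_lt hlt, ← hq, ZMod.natCast_zmod_val]

theorem shift_mul_shift_eq_shift_sq_iff (hℓ : ℓ ≠ 0) {m : ℕ} (a b c : ZMod (ℓ ^ (m + 1))) :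
    shift ℓ (m + 1) a * shift ℓ (m + 1) b = shift ℓ (m + 1) c ^ 2 ↔
      reduce ℓ m a * reduce ℓ m b = reduce ℓ m c ^ 2 := by
  have : NeZero (ℓ ^ (m + 1)) := ⟨pow_ne_zero _ hℓ⟩
  simp only [shift, reduce, ZMod.castHom_apply, ZMod.cast_eq_val, ← Nat.cast_mul, ← Nat.cast_pow,
    ZMod.natCast_eq_natCast_iff]
  rw [show ℓ ^ (m + 1 + 1) = ℓ ^ 2 * ℓ ^ m by ring, mul_pow,
    show ℓ * a.val * (ℓ * b.val) = ℓ ^ 2 * (a.val * b.val) by ring,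
    Nat.ModEq.mul_left_cancel_iff' (pow_ne_zero 2 hℓ)]

theorem cone_inter_nonunits_eq_image (hℓ : ℓ.Prime) (m : ℕ) :
    cone (ZMod (ℓ ^ (m + 2))) ∩ {p | ¬IsUnit p.1 ∧ ¬IsUnit p.2.1} =
      Prod.map (shift ℓ (m + 1)) (Prod.map (shift ℓ (m + 1)) (shift ℓ (m + 1))) ''
        ((reduce ℓ m).prodMap ((reduce ℓ m).prodMap (reduce ℓ m)) ⁻¹' cone (ZMod (ℓ ^ m))) := by
  ext ⟨x, y, z⟩
  simp only [cone, mem_inter_iff, mem_ofPred_eq, mem_image, mem_preimage, Prod.exists,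
    RingHom.coe_prodMap, Prod.map_apply, Prod.mk.injEq]
  constructor
  · rintro ⟨h, hx, hy⟩
    obtain ⟨a, rfl⟩ := (range_shift hℓ (m + 1)).symm.subset hx
    obtain ⟨b, rfl⟩ := (range_shift hℓ (m + 1)).symm.subset hy
    obtain ⟨c, rfl⟩ := (range_shift hℓ (m + 1)).symm.subset (not_isUnit_of_mul_eq_sq h hx)
    exact ⟨a, b, c, (shift_mul_shift_eq_shift_sq_iff hℓ.ne_zero a b c).mp h, rfl, rfl, rfl⟩
  · rintro ⟨a, b, c, h, rfl, rfl, rfl⟩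
    exact ⟨(shift_mul_shift_eq_shift_sq_iff hℓ.ne_zero a b c).mpr h,
      (range_shift hℓ (m + 1)).subset (mem_range_self a),
      (range_shift hℓ (m + 1)).subset (mem_range_self b)⟩

theorem ncard_cone_inter_nonunits (hℓ : ℓ.Prime) (m : ℕ) :
    (cone (ZMod (ℓ ^ (m + 2))) ∩ {p | ¬IsUnit p.1 ∧ ¬IsUnit p.2.1}).ncard =
      ℓ ^ 3 * (cone (ZMod (ℓ ^ m))).ncard := by
  set π := (reduce ℓ m).prodMap ((reduce ℓ m).prodMap (reduce ℓ m))
  have hπ : Surjective π := (ZMod.ringHom_surjective (reduce ℓ m)).prodMap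
    ((ZMod.ringHom_surjective (reduce ℓ m)).prodMap (ZMod.ringHom_surjective (reduce ℓ m)))
  have hcard := card_preimage_mul_card_of_surjective π hπ (cone (ZMod (ℓ ^ m)))
  simp only [Nat.card_prod, Nat.card_zmod, Nat.card_coe_set_eq] at hcard
  have hshift := shift_injective hℓ.ne_zero (m + 1)
  rw [cone_inter_nonunits_eq_image hℓ, ncard_image_of_injective _
    (hshift.prodMap (hshift.prodMap hshift))]
  exact Nat.eq_of_mul_eq_mul_right (pow_pos hℓ.pos (3 * m)) (by linear_combination hcard)

theorem ncard_cone_zmod_prime_pow_add_two (hℓ : ℓ.Prime) (m : ℕ) :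
    (cone (ZMod (ℓ ^ (m + 2)))).ncard = ℓ ^ (m + 1) * (ℓ - 1) * ℓ ^ (m + 2) +
      ℓ ^ (m + 1) * (ℓ - 1) * ℓ ^ (m + 1) + ℓ ^ 3 * (cone (ZMod (ℓ ^ m))).ncard := by
  have : NeZero (ℓ ^ (m + 2)) := ⟨pow_ne_zero _ hℓ.ne_zero⟩
  rw [ncard_cone, ncard_cone_inter_nonunits hℓ, ← range_shift hℓ,
    ncard_range_of_injective (shift_injective hℓ.ne_zero _), Nat.card_zmod, Nat.card_zmod,
    Nat.card_eq_fintype_card, ZMod.card_units_eq_totient, Nat.totient_prime_pow_succ hℓ]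

-- The closed form multiplied by `ℓ`, which makes it uniform in the parity of `n` and free of
-- truncated subtraction.
theorem prime_mul_ncard_cone_zmod_prime_pow (hℓ : ℓ.Prime) : ∀ n : ℕ,
    ℓ * (cone (ZMod (ℓ ^ n))).ncard + ℓ ^ ((3 * n + 1) / 2) = ℓ ^ (2 * n + 1) + ℓ ^ (2 * n)
  | 0 => by
    rw [pow_zero, (eq_univ_of_forall fun _ => Subsingleton.elim _ _ : cone (ZMod 1) = univ),
      ncard_univ]
    simp
  | 1 => by
    have : Fact ℓ.Prime := ⟨hℓ⟩
    rw [pow_one, ncard_cone_of_commGroupWithZero, Nat.card_zmod]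
    ring
  | m + 2 => by
    have ih := prime_mul_ncard_cone_zmod_prime_pow hℓ m
    rw [ncard_cone_zmod_prime_pow_add_two hℓ,
      show (3 * (m + 2) + 1) / 2 = (3 * m + 1) / 2 + 3 by omega]
    zify [hℓ.one_le] at ih ⊢
    linear_combination (ℓ : ℤ) ^ 3 * ih

end ZModPrimePow

theorem stmt6_general (ℓ : ℕ) (hℓ : ℓ.Prime) (n : ℕ) :
    (Nat.card {p : ZMod (ℓ ^ n) × ZMod (ℓ ^ n) × ZMod (ℓ ^ n) //
        p.1 * p.2.1 = p.2.2 ^ 2} : ℤ) =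
      if Even n then ℓ ^ (2 * n) + ℓ ^ (2 * n - 1) - ℓ ^ (3 * n / 2 - 1)
      else ℓ ^ (2 * n) + ℓ ^ (2 * n - 1) - ℓ ^ ((3 * n - 1) / 2) := by
  change (Nat.card (cone (ZMod (ℓ ^ n))) : ℤ) = _
  have key := prime_mul_ncard_cone_zmod_prime_pow hℓ n
  rw [Nat.card_coe_set_eq]
  split_ifs with hn <;> congr 1 <;>
    refine Nat.eq_sub_of_add_eq (Nat.eq_of_mul_eq_mul_left hℓ.pos ?_)
  · obtain ⟨k, rfl⟩ := hn
    rcases k with _ | k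
    · simp only [add_zero, mul_zero, Nat.zero_div, zero_tsub, zero_add, pow_zero, pow_one] at key ⊢
      linear_combination key
    · rw [show 2 * (k + 1 + (k + 1)) - 1 = 4 * k + 3 by omega,
        show 3 * (k + 1 + (k + 1)) / 2 - 1 = 3 * k + 2 by omega,
        show (3 * (k + 1 + (k + 1)) + 1) / 2 = 3 * k + 3 by omega] at *
      linear_combination key
  · obtain ⟨k, rfl⟩ := Nat.not_even_iff_odd.mp hn
    rw [show 2 * (2 * k + 1) - 1 = 4 * k + 1 by omega,
      show (3 * (2 * k + 1) - 1) / 2 = 3 * k + 1 by omega,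
      show (3 * (2 * k + 1) + 1) / 2 = 3 * k + 2 by omega] at *
    linear_combination key

/-- Number of solutions of `x y = z²` over `Z/ℓ^n`. -/
theorem stmt6 (ℓ : ℕ) (hℓ : ℓ.Prime) (h3 : 3 ≤ ℓ) (n : ℕ) (hn : 1 ≤ n) :
    (Nat.card {p : ZMod (ℓ ^ n) × ZMod (ℓ ^ n) × ZMod (ℓ ^ n) //
        p.1 * p.2.1 = p.2.2 ^ 2} : ℤ) =
      if Even n then ℓ ^ (2 * n) + ℓ ^ (2 * n - 1) - ℓ ^ (3 * n / 2 - 1)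
      else ℓ ^ (2 * n) + ℓ ^ (2 * n - 1) - ℓ ^ ((3 * n - 1) / 2) :=
  stmt6_general ℓ hℓ n
end

section
/- Let ℓ be a prime, n ≥ 1, and q ∈ (Z/ℓ^n)^× with q ≡ 1 mod ℓ. Let ν be the ℓ-adic valuation of q − 1 (so 1 ≤ ν ≤ n, where ν = n means q = 1 in Z/ℓ^n). Then every matrix over Z/ℓ^n of the form [[1, w],[0, q]] with w ∈ Z/ℓ^n is GL₂(Z/ℓ^n)-conjugate to exactly one matrix M_a = [[1, ℓ^a],[0, q]] with 0 ≤ a ≤ ν. -/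
/-!
Conjugating `[[1, m], [0, q]]` by `[[u, y], [0, 1]]` replaces `m` by `u * m + y * (q - 1)`.
Writing `w = u * ℓ ^ v` with `u` a unit, `w` is therefore reached from `M_v` when `v ≤ ν`, and
from `M_ν` when `w` is a multiple of `q - 1 = u' * ℓ ^ ν`. Conversely, reducing modulo the ideal
`(w, q - 1)` shows that this ideal is a conjugacy invariant of `[[1, w], [0, q]]`; for `M_a` with
`a ≤ ν` it is `(ℓ ^ a)`, and the ideals `(ℓ ^ a)`, `a ≤ n`, of `Z/ℓ^n` are pairwise distinct
because `ℓ` is nilpotent.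
-/

theorem IsNilpotent.pow_eq_zero_of_pow_dvd_pow {R : Type*} [CommRing R] {π : R}
    (hπ : IsNilpotent π) {a b : ℕ} (hab : b < a) (h : π ^ a ∣ π ^ b) : π ^ b = 0 := by
  obtain ⟨c, hc⟩ := h
  have hunit : IsUnit (1 - c * π ^ (a - b)) :=
    (Commute.isNilpotent_mul_left (Commute.all c _)
      (hπ.pow_of_pos (n := a - b) (by omega))).isUnit_one_sub
  refine hunit.mul_right_eq_zero.mp ?_
  calc (1 - c * π ^ (a - b)) * π ^ b = π ^ b - c * π ^ (a - b + b) := by ring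
    _ = 0 := by rw [Nat.sub_add_cancel hab.le, hc]; ring

namespace ZMod

variable {p n : ℕ} [Fact p.Prime]

theorem natCast_self_pow_eq_zero_iff {a : ℕ} : (p : ZMod (p ^ n)) ^ a = 0 ↔ n ≤ a := by
  rw [← Nat.cast_pow, ZMod.natCast_eq_zero_iff,
    Nat.pow_dvd_pow_iff_le_right (Fact.out : p.Prime).one_lt]

theorem natCast_self_pow_dvd_pow_iff {a b : ℕ} (ha : a ≤ n) :
    (p : ZMod (p ^ n)) ^ a ∣ (p : ZMod (p ^ n)) ^ b ↔ a ≤ b := by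
  refine ⟨fun h => ?_, pow_dvd_pow _⟩
  by_contra! hba
  have hnil : IsNilpotent (p : ZMod (p ^ n)) := ⟨n, natCast_self_pow_eq_zero_iff.mpr le_rfl⟩
  have := natCast_self_pow_eq_zero_iff.mp (hnil.pow_eq_zero_of_pow_dvd_pow hba h)
  omega

theorem exists_unit_mul_pow_padicValNat {x : ZMod (p ^ n)} (hx : x ≠ 0) :
    ∃ u : (ZMod (p ^ n))ˣ, x = u * (p : ZMod (p ^ n)) ^ padicValNat p x.val := by
  have hp : p.Prime := Fact.out
  have : NeZero (p ^ n) := ⟨pow_ne_zero n hp.ne_zero⟩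
  have hval : x.val ≠ 0 := (ZMod.val_ne_zero x).mpr hx
  set m := x.val / p ^ padicValNat p x.val
  have hm : ¬ p ∣ m := by
    simpa only [m, ← Nat.factorization_def _ hp] using Nat.not_dvd_ordCompl hp hval
  have hunit : IsUnit (m : ZMod (p ^ n)) :=
    (ZMod.isUnit_iff_coprime m _).mpr ((hp.coprime_iff_not_dvd.mpr hm).symm.pow_right n)
  refine ⟨hunit.unit, ?_⟩
  rw [IsUnit.unit_spec, ← Nat.cast_pow, ← Nat.cast_mul, mul_comm,
    Nat.mul_div_cancel' pow_padicValNat_dvd, ZMod.natCast_zmod_val]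

theorem exists_unit_mul_pow (x : ZMod (p ^ n)) :
    ∃ (u : (ZMod (p ^ n))ˣ) (v : ℕ), x = u * (p : ZMod (p ^ n)) ^ v := by
  by_cases hx : x = 0
  · exact ⟨1, n, by rw [hx, natCast_self_pow_eq_zero_iff.mpr le_rfl, mul_zero]⟩
  · obtain ⟨u, hu⟩ := exists_unit_mul_pow_padicValNat hx
    exact ⟨u, _, hu⟩

end ZMod

section UpperTriangular

variable {R : Type*} [CommRing R]

theorem exists_gl_conj_eq_iff_isConj {M N : Matrix (Fin 2) (Fin 2) R} :
    (∃ g : GL (Fin 2) R, (g : Matrix (Fin 2) (Fin 2) R) * M *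
      ((g⁻¹ : GL (Fin 2) R) : Matrix (Fin 2) (Fin 2) R) = N) ↔ IsConj M N := by
  simp only [IsConj, SemiconjBy, Units.mul_inv_eq_iff_eq_mul]

theorem isConj_of_eq_unit_mul_add {m q w : R} (u : Rˣ) (y : R)
    (hw : w = u * m + y * (q - 1)) : IsConj !![1, m; 0, q] !![1, w; 0, q] := by
  obtain ⟨c, hc⟩ : IsUnit !![(u : R), y; 0, 1] := by
    simp [Matrix.isUnit_iff_isUnit_det, Matrix.det_fin_two]
  refine ⟨c, ?_⟩
  simp only [SemiconjBy, hc, Matrix.mul_fin_two, hw]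
  ext i j
  fin_cases i <;> fin_cases j <;> simp
  ring

theorem IsConj.mem_span_pair {x y q : R} (h : IsConj !![1, x; 0, q] !![1, y; 0, q]) :
    y ∈ Ideal.span {x, q - 1} := by
  set I := Ideal.span {x, q - 1}
  have hx : Ideal.Quotient.mk I x = 0 :=
    Ideal.Quotient.eq_zero_iff_mem.mpr (Ideal.subset_span (by simp))
  have hq : Ideal.Quotient.mk I q = 1 :=
    Ideal.Quotient.eq.mpr (Ideal.subset_span (by simp))
  have hM : (Ideal.Quotient.mk I).mapMatrix !![1, x; 0, q] = 1 := by
    rw [Matrix.one_fin_two]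
    ext i j
    fin_cases i <;> fin_cases j <;> simp [hx, hq]
  have hN := (Ideal.Quotient.mk I).mapMatrix.toMonoidHom.map_isConj h
  simp only [RingHom.toMonoidHom_eq_coe, MonoidHom.coe_coe, hM, isConj_one_right] at hN
  simpa [Ideal.Quotient.eq_zero_iff_mem] using congrFun (congrFun hN 0) 1

theorem IsConj.dvd_of_dvd_sub_one {x y q : R} (hx : x ∣ q - 1)
    (h : IsConj !![1, x; 0, q] !![1, y; 0, q]) : x ∣ y := by
  have hy := h.mem_span_pair
  rwa [Ideal.span_insert, sup_eq_left.mpr (Ideal.span_singleton_le_span_singleton.mpr hx),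
    Ideal.mem_span_singleton] at hy

end UpperTriangular

section Classification

variable {p n ν : ℕ} [Fact p.Prime] {q : ZMod (p ^ n)}

theorem exists_le_isConj (u : (ZMod (p ^ n))ˣ) (hq : q - 1 = u * (p : ZMod (p ^ n)) ^ ν)
    (w : ZMod (p ^ n)) :
    ∃ a ≤ ν, IsConj !![1, (p : ZMod (p ^ n)) ^ a; 0, q] !![1, w; 0, q] := by
  obtain ⟨u₀, v, rfl⟩ := ZMod.exists_unit_mul_pow w
  rcases le_or_gt v ν with hv | hv
  · exact ⟨v, hv, isConj_of_eq_unit_mul_add u₀ 0 (by ring)⟩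
  · refine ⟨ν, le_rfl,
      isConj_of_eq_unit_mul_add u (u₀ * u⁻¹ * (p : ZMod (p ^ n)) ^ (v - ν) - 1) ?_⟩
    rw [hq, ← Nat.sub_add_cancel hv.le, pow_add, Nat.add_sub_cancel]
    linear_combination
      (-(u₀ : ZMod (p ^ n)) * (p : ZMod (p ^ n)) ^ (v - ν) * (p : ZMod (p ^ n)) ^ ν) * u.inv_mul

theorem existsUnique_le_isConj (hνn : ν ≤ n) (u : (ZMod (p ^ n))ˣ)
    (hq : q - 1 = u * (p : ZMod (p ^ n)) ^ ν) (w : ZMod (p ^ n)) :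
    ∃! a, a ≤ ν ∧ IsConj !![1, (p : ZMod (p ^ n)) ^ a; 0, q] !![1, w; 0, q] := by
  obtain ⟨a, ha, hconj⟩ := exists_le_isConj u hq w
  have hdvd {c : ℕ} (hc : c ≤ ν) : (p : ZMod (p ^ n)) ^ c ∣ q - 1 :=
    hq ▸ (pow_dvd_pow _ hc).mul_left _
  refine ⟨a, ⟨ha, hconj⟩, fun b ⟨hb, hb'⟩ => le_antisymm ?_ ?_⟩
  · exact (ZMod.natCast_self_pow_dvd_pow_iff (hb.trans hνn)).mp
      ((hb'.trans hconj.symm).dvd_of_dvd_sub_one (hdvd hb))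
  · exact (ZMod.natCast_self_pow_dvd_pow_iff (ha.trans hνn)).mp
      ((hconj.trans hb'.symm).dvd_of_dvd_sub_one (hdvd ha))

end Classification

/-- Every matrix `[[1, w],[0, q]]` over `Z/ℓ^n` is conjugate to exactly one matrix
`M_a = [[1, ℓ^a],[0, q]]` with `0 ≤ a ≤ ν`. -/
theorem stmt8 (ℓ : ℕ) (hℓ : ℓ.Prime) (n : ℕ) (q : ZMod (ℓ ^ n)) (ν : ℕ) (hνn : ν ≤ n)
    (hν : (q = 1 → ν = n) ∧ (q ≠ 1 → ν = padicValNat ℓ (q - 1).val)) :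
    ∀ w : ZMod (ℓ ^ n), ∃! a : ℕ, a ≤ ν ∧
      ∃ g : GL (Fin 2) (ZMod (ℓ ^ n)),
        (g : Matrix (Fin 2) (Fin 2) (ZMod (ℓ ^ n))) *
            (!![1, (ℓ : ZMod (ℓ ^ n)) ^ a; 0, q]) *
            ((g⁻¹ : GL (Fin 2) (ZMod (ℓ ^ n))) : Matrix (Fin 2) (Fin 2) (ZMod (ℓ ^ n))) =
          !![1, w; 0, q] := by
  have : Fact ℓ.Prime := ⟨hℓ⟩
  obtain ⟨u, hq⟩ : ∃ u : (ZMod (ℓ ^ n))ˣ, q - 1 = u * (ℓ : ZMod (ℓ ^ n)) ^ ν := by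
    by_cases hq1 : q = 1
    · refine ⟨1, ?_⟩
      rw [hq1, hν.1 hq1, ZMod.natCast_self_pow_eq_zero_iff.mpr le_rfl, sub_self, mul_zero]
    · rw [hν.2 hq1]
      exact ZMod.exists_unit_mul_pow_padicValNat (sub_ne_zero.mpr hq1)
  intro w
  simpa only [exists_gl_conj_eq_iff_isConj] using existsUnique_le_isConj hνn u hq w
end

section
/- Let ℓ be a prime, n ≥ 1, and q ∈ (Z/ℓ^n)^× with q ≢ 1 mod ℓ^n, and let ν < n be the ℓ-adic valuation of q − 1 with ν ≥ 1. For 0 ≤ a < ν, the centralizer in GL₂(Z/ℓ^n) of the matrix M_a = [[1, ℓ^a],[0, q]] has cardinality ℓ^{2n+2a} − ℓ^{2n+2a−1}. -/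
/-!
Write `q - 1 = ℓ^a c` with `c ≡ 0 mod ℓ`. A matrix `[[x, y], [z, w]]` commutes with
`[[1, ℓ^a], [0, q]]` iff `ℓ^a z = 0` and `ℓ^a (x - w + c y) = 0`. Since `a < n`, both
conditions force `z ≡ 0` and `x ≡ w` modulo `ℓ`, so the determinant is `w²` modulo `ℓ` and
the matrix is invertible iff `w` is a unit. The centralizer is therefore parametrized by
`(w, y, z, x - w + c y) ∈ (ℤ/ℓⁿ)ˣ × ℤ/ℓⁿ × ker(ℓ^a) × ker(ℓ^a)`, of size
`ℓⁿ⁻¹(ℓ - 1) · ℓⁿ · ℓ^{2a}`. Over a local ring `R`, with `ℓ^a` replaced by any `t ≠ 0` and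
`c` by any element of the maximal ideal, the same argument gives `|Rˣ| · |R| · |ann t|²`.
-/

open IsLocalRing

section UpperTriangularCentralizer

variable {R : Type*} [CommRing R] {t c q : R}

theorem commute_upperTriangular_iff (hq : q - 1 = t * c) (x y z w : R) :
    !![x, y; z, w] * !![1, t; 0, q] = !![1, t; 0, q] * !![x, y; z, w] ↔
      t * z = 0 ∧ t * (x - w + c * y) = 0 := by
  rw [Matrix.mul_fin_two, Matrix.mul_fin_two, ← Matrix.ext_iff]
  simp only [Fin.forall_fin_two, Matrix.of_apply, Matrix.cons_val', Matrix.cons_val_zero,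
    Matrix.empty_val', Matrix.cons_val_fin_one, Matrix.cons_val_one]
  constructor
  · rintro ⟨⟨h00, h01⟩, -, -⟩
    exact ⟨by linear_combination -h00, by linear_combination h01 - y * hq⟩
  · rintro ⟨hz, hx⟩
    exact ⟨⟨by linear_combination -hz, by linear_combination hx + y * hq⟩,
      by linear_combination -c * hz - z * hq, by linear_combination hz⟩

theorem mem_maximalIdeal_of_mul_eq_zero [IsLocalRing R] {z : R} (ht : t ≠ 0) (h : t * z = 0) :
    z ∈ maximalIdeal R := fun hz => ht (hz.mul_left_eq_zero.mp h)

theorem isUnit_det_iff_of_commute_upperTriangular [IsLocalRing R] (ht : t ≠ 0)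
    (hc : c ∈ maximalIdeal R) {x y z w : R} (hz : t * z = 0) (hx : t * (x - w + c * y) = 0) :
    IsUnit (x * w - y * z) ↔ IsUnit w := by
  have hz0 : residue R z = 0 := (residue_eq_zero_iff z).mpr (mem_maximalIdeal_of_mul_eq_zero ht hz)
  have hc0 : residue R c = 0 := (residue_eq_zero_iff c).mpr hc
  have hxw : residue R x = residue R w := by
    have := (residue_eq_zero_iff _).mpr (mem_maximalIdeal_of_mul_eq_zero ht hx)
    simp only [map_add, map_sub, map_mul, hc0] at this
    linear_combination this
  have hdet : residue R (x * w - y * z) = residue R w ^ 2 := by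
    simp only [map_sub, map_mul, hz0, hxw]
    ring
  rw [← residue_ne_zero_iff_isUnit, ← residue_ne_zero_iff_isUnit, hdet]
  exact pow_ne_zero_iff two_ne_zero

noncomputable def upperTriangularCentralizerEquiv [IsLocalRing R] (ht : t ≠ 0)
    (hc : c ∈ maximalIdeal R) (hq : q - 1 = t * c) :
    Rˣ × R × {z : R // t * z = 0} × {k : R // t * k = 0} ≃
      {g : GL (Fin 2) R // (g : Matrix (Fin 2) (Fin 2) R) * !![1, t; 0, q] =
        !![1, t; 0, q] * (g : Matrix (Fin 2) (Fin 2) R)} where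
  toFun := fun ⟨w, y, z, k⟩ =>
    have hcond : t * z = 0 ∧ t * ((w - c * y + k) - w + c * y) = 0 :=
      ⟨z.2, by linear_combination k.2⟩
    ⟨Matrix.GeneralLinearGroup.mk'' !![w - c * y + k, y; z, w] (by
      rw [Matrix.det_fin_two_of, isUnit_det_iff_of_commute_upperTriangular ht hc hcond.1 hcond.2]
      exact w.isUnit), by simpa using (commute_upperTriangular_iff hq _ _ _ _).mpr hcond⟩
  invFun := fun g =>
    have hcond := (commute_upperTriangular_iff hq _ _ _ _).mp
      ((Matrix.eta_fin_two (g.1 : Matrix (Fin 2) (Fin 2) R)) ▸ g.2)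
    ⟨((isUnit_det_iff_of_commute_upperTriangular ht hc hcond.1 hcond.2).mp (by
        rw [← Matrix.det_fin_two]; exact (Matrix.isUnit_iff_isUnit_det _).mp g.1.isUnit)).unit,
      g.1 0 1, ⟨g.1 1 0, hcond.1⟩, ⟨g.1 0 0 - g.1 1 1 + c * g.1 0 1, hcond.2⟩⟩
  left_inv := fun ⟨w, y, z, k⟩ => by
    ext <;> simp; ring
  right_inv := fun g => by
    ext i j
    fin_cases i <;> fin_cases j <;> simp

theorem card_upperTriangularCentralizer [IsLocalRing R] (ht : t ≠ 0) (hc : c ∈ maximalIdeal R)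
    (hq : q - 1 = t * c) :
    Nat.card {g : GL (Fin 2) R // (g : Matrix (Fin 2) (Fin 2) R) * !![1, t; 0, q] =
        !![1, t; 0, q] * (g : Matrix (Fin 2) (Fin 2) R)} =
      Nat.card Rˣ * Nat.card R * Nat.card {z : R // t * z = 0} ^ 2 := by
  rw [← Nat.card_congr (upperTriangularCentralizerEquiv ht hc hq), Nat.card_prod, Nat.card_prod,
    Nat.card_prod]
  ring

end UpperTriangularCentralizer

namespace ZMod

theorem card_mul_eq_zero_s9 (N d : ℕ) [NeZero N] :
    Nat.card {z : ZMod N // (d : ZMod N) * z = 0} = N.gcd d := by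
  rw [← Nat.card_zmod N, ← IsAddCyclic.card_nsmulAddMonoidHom_ker, Nat.card_zmod]
  exact Nat.card_congr (Equiv.subtypeEquivRight fun z => by simp [nsmul_eq_mul])

theorem isLocalRing_prime_pow {ℓ n : ℕ} [Fact ℓ.Prime] (hn : n ≠ 0) :
    IsLocalRing (ZMod (ℓ ^ n)) :=
  have : Nontrivial (ZMod (ℓ ^ n)) :=
    nontrivial_iff.mpr (Nat.one_lt_pow hn (Fact.out : ℓ.Prime).one_lt).ne'
  .of_surjective' (PadicInt.toZModPow n) (ringHom_surjective _)

theorem natCast_mem_maximalIdeal_prime_pow {ℓ n : ℕ} [IsLocalRing (ZMod (ℓ ^ n))] :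
    (ℓ : ZMod (ℓ ^ n)) ∈ maximalIdeal (ZMod (ℓ ^ n)) := by
  rw [mem_maximalIdeal, mem_nonunits_iff]
  exact IsNilpotent.not_isUnit ⟨n, by rw [← Nat.cast_pow, natCast_self]⟩

theorem natCast_pow_ne_zero {ℓ n a : ℕ} (hℓ : ℓ.Prime) (ha : a < n) :
    (ℓ : ZMod (ℓ ^ n)) ^ a ≠ 0 := by
  rw [← Nat.cast_pow, Ne, natCast_eq_zero_iff, Nat.pow_dvd_pow_iff_le_right hℓ.one_lt]
  omega

end ZMod

/-- The cardinality of the centralizer of `M_a = [[1, ℓ^a],[0, q]]` in `GL₂(Z/ℓ^n)`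
for `a < ν = ord_ℓ(q - 1)`. -/
theorem stmt9 (ℓ : ℕ) (hℓ : ℓ.Prime) (n : ℕ)
    (q : ZMod (ℓ ^ n)) (ν : ℕ) (hν : ν = padicValNat ℓ (q - 1).val)
    (hνn : ν < n) (a : ℕ) (ha : a < ν) :
    Nat.card {g : GL (Fin 2) (ZMod (ℓ ^ n)) //
        (g : Matrix (Fin 2) (Fin 2) (ZMod (ℓ ^ n))) *
            (!![1, (ℓ : ZMod (ℓ ^ n)) ^ a; 0, q]) =
          (!![1, (ℓ : ZMod (ℓ ^ n)) ^ a; 0, q]) *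
            (g : Matrix (Fin 2) (Fin 2) (ZMod (ℓ ^ n)))} =
      ℓ ^ (2 * n + 2 * a) - ℓ ^ (2 * n + 2 * a - 1) := by
  have : Fact ℓ.Prime := ⟨hℓ⟩
  obtain ⟨m, rfl⟩ : ∃ m, n = m + 1 := ⟨n - 1, by omega⟩
  have := ZMod.isLocalRing_prime_pow (ℓ := ℓ) m.add_one_ne_zero
  obtain ⟨c₀, hc₀⟩ : ℓ ^ (a + 1) ∣ (q - 1).val :=
    (pow_dvd_pow ℓ (by omega)).trans (hν ▸ pow_padicValNat_dvd)
  have hq : q - 1 = (ℓ : ZMod (ℓ ^ (m + 1))) ^ a * (ℓ * c₀) := by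
    rw [← ZMod.natCast_zmod_val (q - 1), hc₀]
    push_cast
    ring
  rw [card_upperTriangularCentralizer (ZMod.natCast_pow_ne_zero hℓ (by omega))
    (Ideal.mul_mem_right _ _ ZMod.natCast_mem_maximalIdeal_prime_pow) hq, Nat.card_zmod,
    ← Nat.cast_pow, ZMod.card_mul_eq_zero_s9, Nat.gcd_eq_right (pow_dvd_pow ℓ (by omega)),
    Nat.card_eq_fintype_card, ZMod.card_units_eq_totient, Nat.totient_prime_pow hℓ m.add_one_pos]
  rw [Nat.add_sub_cancel, show 2 * (m + 1) + 2 * a - 1 = 2 * m + 2 * a + 1 by omega,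
    show 2 * (m + 1) + 2 * a = 2 * m + 2 * a + 1 + 1 by omega, pow_succ ℓ (2 * m + 2 * a + 1),
    ← Nat.mul_sub_one]
  ring
end

section
/- Let p ≥ 5 be a prime. The coefficient c_{A,B} ∈ F_p[A,B] of x^{p−1} in (x³ + Ax + B)^{(p−1)/2} is given by the sum over i from ⌈(p−1)/6⌉ to ⌊(p−1)/4⌋ of binom((p−1)/2, i)·binom(i, 3i − (p−1)/2)·A^{3i−(p−1)/2}·B^{(p−1)/2−2i}. In particular c_{A,B} is nonzero and homogeneous of weighted degree (p−1)/2 when A is given weight 2 and B weight 3. -/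
/-!
Write `m = (p - 1)/2`, so `p - 1 = 2m`, and expand `(x³ + (Ax + B))^m` binomially: the term with
`i` factors `Ax + B` contributes `x^(3(m - i))` times `(Ax + B)^i`, so it reaches `x^(2m)` exactly
through `A^(3i - m) B^(m - 2i)`, which forces `m/3 ≤ i ≤ m/2`. Each such monomial has weight
`2(3i - m) + 3(m - 2i) = m`. The exponents of `A` are pairwise distinct, and for `i = ⌊m/2⌋` both
binomial coefficients have entries `≤ m < p`, so that coefficient survives in `𝔽_p`.
-/

namespace Polynomial

open Finset

theorem coeff_C_mul_X_add_C_pow {R : Type*} [CommSemiring R] (a b : R) (n k : ℕ) :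
    ((C a * X + C b) ^ n).coeff k = (n.choose k : R) * a ^ k * b ^ (n - k) := by
  have hterm : ∀ j, (C a * X) ^ j * C b ^ (n - j) * (n.choose j : R[X]) =
      C ((n.choose j : R) * a ^ j * b ^ (n - j)) * X ^ j := fun j => by
    simp only [mul_pow, ← C_pow, ← C_eq_natCast, C_mul]; ring
  simp only [add_pow, hterm, finsetSum_coeff, coeff_C_mul_X_pow, sum_ite_eq, mem_range]
  split_ifs
  · rfl
  · rw [Nat.choose_eq_zero_of_lt (by omega), Nat.cast_zero, zero_mul, zero_mul]

theorem coeff_X_pow_three_add_C_mul_X_add_C_pow_two_mul {R : Type*} [CommSemiring R]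
    (a b : R) (m : ℕ) :
    ((X ^ 3 + C a * X + C b : R[X]) ^ m).coeff (2 * m) =
      ∑ i ∈ Icc ((m + 2) / 3) (m / 2),
        ((m.choose i * i.choose (3 * i - m) : ℕ) : R) * a ^ (3 * i - m) * b ^ (m - 2 * i) := by
  have hterm : ∀ i,
      ((C a * X + C b) ^ i * (X ^ 3) ^ (m - i) * (m.choose i : R[X])).coeff (2 * m) =
        if 3 * (m - i) ≤ 2 * m then
          (m.choose i : R) * ((C a * X + C b) ^ i).coeff (2 * m - 3 * (m - i))
        else 0 := fun i => by
    rw [← pow_mul, mul_comm, ← mul_assoc, ← C_eq_natCast, coeff_mul_X_pow', coeff_C_mul]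
  rw [show X ^ 3 + C a * X + C b = C a * X + C b + X ^ 3 by ring, add_pow, finsetSum_coeff]
  simp only [hterm, coeff_C_mul_X_add_C_pow]
  refine (sum_subset_zero_on_sdiff (fun i hi => ?_) (fun i hi => ?_) (fun i hi => ?_)).symm
  · simp only [mem_Icc, mem_range] at hi ⊢; omega
  · simp only [mem_sdiff, mem_Icc, mem_range, not_and_or, not_le] at hi
    rw [ite_eq_right_iff]
    intro h
    rw [Nat.choose_eq_zero_of_lt (show i < 2 * m - 3 * (m - i) by omega)]
    simp
  · simp only [mem_Icc] at hi
    rw [if_pos (by omega), show 2 * m - 3 * (m - i) = 3 * i - m by omega,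
      show i - (3 * i - m) = m - 2 * i by omega]
    push_cast; ring

end Polynomial

namespace MvPolynomial

theorem isWeightedHomogeneous_C_mul_X_pow_mul_X_pow {R σ M : Type*} [CommSemiring R]
    [AddCommMonoid M] (w : σ → M) (r : R) (i j : σ) (u v : ℕ) :
    IsWeightedHomogeneous w (C r * X i ^ u * X j ^ v) (u • w i + v • w j) := by
  simpa using ((isWeightedHomogeneous_C w r).mul ((isWeightedHomogeneous_X R w i).pow u)).mul
    ((isWeightedHomogeneous_X R w j).pow v)

theorem coeff_sum_C_mul_X_pow_mul_X_pow {R σ ι : Type*} [CommSemiring R]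
    {i j : σ} (hij : i ≠ j) (s : Finset ι) (r : ι → R) (u v : ι → ℕ)
    (hu : Set.InjOn u s) {k : ι} (hk : k ∈ s) :
    coeff (Finsupp.single i (u k) + Finsupp.single j (v k))
      (∑ l ∈ s, C (r l) * X i ^ u l * X j ^ v l) = r k := by
  classical
  simp only [X_pow_eq_monomial, C_mul_monomial, monomial_mul, mul_one, coeff_sum, coeff_monomial]
  rw [Finset.sum_eq_single_of_mem k hk fun l hl hlk => if_neg fun h => hlk (hu hl hk ?_),
    if_pos rfl]
  simpa [hij] using DFunLike.congr_fun h i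

end MvPolynomial

theorem ZMod.natCast_choose_ne_zero {p n k : ℕ} (hp : p.Prime) (hn : n < p) (hk : k ≤ n) :
    (n.choose k : ZMod p) ≠ 0 := by
  rw [Ne, ZMod.natCast_eq_zero_iff]
  exact (Nat.Prime.coprime_iff_not_dvd hp).mp (hp.coprime_choose_of_lt hn hk)

open MvPolynomial in
/-- The coefficient `c_{A,B}` of `x^(p-1)` in `(x³ + Ax + B)^((p-1)/2)`: explicit formula,
nonvanishing, and weighted homogeneity of degree `(p-1)/2` for weights `2, 3`. -/
theorem stmt13 (p : ℕ) (hp : p.Prime) (hp5 : 5 ≤ p)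
    (c : MvPolynomial (Fin 2) (ZMod p))
    (hc : c = (Polynomial.coeff
      ((Polynomial.X ^ 3 + Polynomial.C (X 0) * Polynomial.X +
          Polynomial.C (X 1) : Polynomial (MvPolynomial (Fin 2) (ZMod p))) ^ ((p - 1) / 2))
      (p - 1))) :
    c = ∑ i ∈ Finset.Icc ((p + 4) / 6) ((p - 1) / 4),
        (C ((Nat.choose ((p - 1) / 2) i * Nat.choose i (3 * i - (p - 1) / 2) : ℕ) :
            ZMod p)) *
          X 0 ^ (3 * i - (p - 1) / 2) * X 1 ^ ((p - 1) / 2 - 2 * i) ∧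
      c ≠ 0 ∧
      IsWeightedHomogeneous (fun j : Fin 2 => if j = 0 then 2 else 3) c ((p - 1) / 2) := by
  have hodd : p % 2 = 1 := Nat.odd_iff.mp (hp.odd_of_ne_two (by omega))
  set m := (p - 1) / 2
  have hform : c = ∑ i ∈ Finset.Icc ((p + 4) / 6) ((p - 1) / 4),
      C ((m.choose i * i.choose (3 * i - m) : ℕ) : ZMod p) * X 0 ^ (3 * i - m) *
        X 1 ^ (m - 2 * i) := by
    rw [show (p + 4) / 6 = (m + 2) / 3 by omega, show (p - 1) / 4 = m / 2 by omega, hc,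
      show p - 1 = 2 * m by omega, Polynomial.coeff_X_pow_three_add_C_mul_X_add_C_pow_two_mul]
    simp only [map_natCast]
  refine ⟨hform, fun hc0 => ?_, ?_⟩
  · have : Fact p.Prime := ⟨hp⟩
    have hmid : m / 2 ∈ Finset.Icc ((p + 4) / 6) ((p - 1) / 4) := Finset.mem_Icc.mpr (by omega)
    have hinj : Set.InjOn (fun i => 3 * i - m) (Finset.Icc ((p + 4) / 6) ((p - 1) / 4)) :=
      fun i hi j hj hij => by simp only [Finset.coe_Icc, Set.mem_Icc] at hi hj hij; omega
    have hcoeff := coeff_sum_C_mul_X_pow_mul_X_pow (zero_ne_one : (0 : Fin 2) ≠ 1) _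
      (fun i => ((m.choose i * i.choose (3 * i - m) : ℕ) : ZMod p)) _ (fun i => m - 2 * i)
      hinj hmid
    rw [← hform, hc0, coeff_zero, Nat.cast_mul] at hcoeff
    exact mul_ne_zero (ZMod.natCast_choose_ne_zero hp (by omega) (by omega))
      (ZMod.natCast_choose_ne_zero hp (by omega) (by omega)) hcoeff.symm
  · rw [hform]
    refine IsWeightedHomogeneous.sum _ _ _ fun i hi => ?_
    convert isWeightedHomogeneous_C_mul_X_pow_mul_X_pow (fun j : Fin 2 => if j = 0 then 2 else 3)
      ((m.choose i * i.choose (3 * i - m) : ℕ) : ZMod p) 0 1 (3 * i - m) (m - 2 * i) using 1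
    simp only [Finset.mem_Icc] at hi
    simp only [Fin.isValue, ↓reduceIte, one_ne_zero, smul_eq_mul]
    omega
end
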